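/- arXiv:0912.0643 — 4 statements merged into one kernel-verified Lean document; each statement's English description precedes it below -/
import Mathlib

section
/- Let P̄, χ : (0,∞) × ℝ → ℝ be smooth, 2π-periodic in θ, and satisfy the evolution equation (8): χ_tt + t⁻¹ χ_t − χ_θθ = −2(P̄_t χ_t − P̄_θ χ_θ). Then the quantity Q(t) = ∫₀^{2π} t·e^{2P̄(t,θ)}·χ_t(t,θ) dθ is independent of t ∈ (0,∞). -/
open Real Set MeasureTheory intervalIntegral

/-- Partial derivative in the first (time) variable. -/
noncomputable def pt (f : ℝ → ℝ → ℝ) (t θ : ℝ) : ℝ := deriv (fun s => f s θ) t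

/-- Partial derivative in the second (space) variable. -/
noncomputable def px (f : ℝ → ℝ → ℝ) (t θ : ℝ) : ℝ := deriv (fun x => f t x) θ

namespace ChargeAux

abbrev S : Set (ℝ × ℝ) := Ioi (0:ℝ) ×ˢ (univ : Set ℝ)

lemma isOpen_S : IsOpen S := isOpen_Ioi.prod isOpen_univ

lemma mem_S {t θ : ℝ} (ht : 0 < t) : (t, θ) ∈ S := ⟨ht, trivial⟩

variable {f : ℝ → ℝ → ℝ}

lemma line_t (hf : ContDiffOn ℝ (⊤ : ℕ∞) (Function.uncurry f) S) {t : ℝ} (ht : 0 < t) (θ : ℝ) :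
    HasDerivAt (fun s => f s θ) (fderiv ℝ (Function.uncurry f) (t, θ) (1, 0)) t := by
  have hd : DifferentiableAt ℝ (Function.uncurry f) (t, θ) :=
    (hf.differentiableOn (by simp)).differentiableAt (isOpen_S.mem_nhds (mem_S ht))
  have h1 : HasDerivAt (fun s : ℝ => (s, θ)) ((1 : ℝ), (0 : ℝ)) t :=
    (hasDerivAt_id t).prodMk (hasDerivAt_const t θ)
  exact hd.hasFDerivAt.comp_hasDerivAt t h1

lemma line_x (hf : ContDiffOn ℝ (⊤ : ℕ∞) (Function.uncurry f) S) {t : ℝ} (ht : 0 < t) (θ : ℝ) :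
    HasDerivAt (fun x => f t x) (fderiv ℝ (Function.uncurry f) (t, θ) (0, 1)) θ := by
  have hd : DifferentiableAt ℝ (Function.uncurry f) (t, θ) :=
    (hf.differentiableOn (by simp)).differentiableAt (isOpen_S.mem_nhds (mem_S ht))
  have h1 : HasDerivAt (fun x : ℝ => (t, x)) ((0 : ℝ), (1 : ℝ)) θ :=
    (hasDerivAt_const θ t).prodMk (hasDerivAt_id θ)
  exact hd.hasFDerivAt.comp_hasDerivAt θ h1

lemma pt_eq (hf : ContDiffOn ℝ (⊤ : ℕ∞) (Function.uncurry f) S) {t : ℝ} (ht : 0 < t) (θ : ℝ) :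
    pt f t θ = fderiv ℝ (Function.uncurry f) (t, θ) (1, 0) :=
  (line_t hf ht θ).deriv

lemma px_eq (hf : ContDiffOn ℝ (⊤ : ℕ∞) (Function.uncurry f) S) {t : ℝ} (ht : 0 < t) (θ : ℝ) :
    px f t θ = fderiv ℝ (Function.uncurry f) (t, θ) (0, 1) :=
  (line_x hf ht θ).deriv

lemma hasDerivAt_pt (hf : ContDiffOn ℝ (⊤ : ℕ∞) (Function.uncurry f) S) {t : ℝ} (ht : 0 < t) (θ : ℝ) :
    HasDerivAt (fun s => f s θ) (pt f t θ) t := by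
  rw [pt_eq hf ht θ]; exact line_t hf ht θ

lemma hasDerivAt_px (hf : ContDiffOn ℝ (⊤ : ℕ∞) (Function.uncurry f) S) {t : ℝ} (ht : 0 < t) (θ : ℝ) :
    HasDerivAt (fun x => f t x) (px f t θ) θ := by
  rw [px_eq hf ht θ]; exact line_x hf ht θ

lemma contDiffOn_pt (hf : ContDiffOn ℝ (⊤ : ℕ∞) (Function.uncurry f) S) :
    ContDiffOn ℝ (⊤ : ℕ∞) (Function.uncurry (pt f)) S := by
  have h1 : ContDiffOn ℝ (⊤ : ℕ∞) (fun p => fderiv ℝ (Function.uncurry f) p) S :=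
    hf.fderiv_of_isOpen isOpen_S (by simp)
  have h2 : ContDiffOn ℝ (⊤ : ℕ∞)
      (fun p : ℝ × ℝ => fderiv ℝ (Function.uncurry f) p ((1 : ℝ), (0 : ℝ))) S :=
    h1.clm_apply contDiffOn_const
  refine h2.congr fun p hp => ?_
  exact pt_eq hf hp.1 p.2

lemma contDiffOn_px (hf : ContDiffOn ℝ (⊤ : ℕ∞) (Function.uncurry f) S) :
    ContDiffOn ℝ (⊤ : ℕ∞) (Function.uncurry (px f)) S := by
  have h1 : ContDiffOn ℝ (⊤ : ℕ∞) (fun p => fderiv ℝ (Function.uncurry f) p) S :=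
    hf.fderiv_of_isOpen isOpen_S (by simp)
  have h2 : ContDiffOn ℝ (⊤ : ℕ∞)
      (fun p : ℝ × ℝ => fderiv ℝ (Function.uncurry f) p ((0 : ℝ), (1 : ℝ))) S :=
    h1.clm_apply contDiffOn_const
  refine h2.congr fun p hp => ?_
  exact px_eq hf hp.1 p.2

/-- Continuity of the spatial slice of a function smooth on `S`. -/
lemma continuous_slice (hf : ContDiffOn ℝ (⊤ : ℕ∞) (Function.uncurry f) S) {t : ℝ} (ht : 0 < t) :
    Continuous (fun θ => f t θ) := by
  rw [continuous_iff_continuousAt]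
  intro θ
  have hc : ContinuousAt (Function.uncurry f) (t, θ) :=
    hf.continuousOn.continuousAt (isOpen_S.mem_nhds (mem_S ht))
  exact hc.comp (Continuous.continuousAt (by fun_prop))

end ChargeAux

open ChargeAux

/-- For solutions of equation (8), `Q(t) = ∫₀^{2π} t e^{2P̄} χ_t dθ` is conserved. -/
theorem charge_conserved (P χ : ℝ → ℝ → ℝ)
    (hP : ContDiffOn ℝ (⊤ : ℕ∞) (Function.uncurry P) (Ioi 0 ×ˢ univ))
    (hχ : ContDiffOn ℝ (⊤ : ℕ∞) (Function.uncurry χ) (Ioi 0 ×ˢ univ))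
    (hPper : ∀ t θ : ℝ, P t (θ + 2 * π) = P t θ)
    (hχper : ∀ t θ : ℝ, χ t (θ + 2 * π) = χ t θ)
    (heq8 : ∀ t ∈ Ioi (0:ℝ), ∀ θ : ℝ,
      pt (pt χ) t θ + t⁻¹ * pt χ t θ - px (px χ) t θ
        = -2 * (pt P t θ * pt χ t θ - px P t θ * px χ t θ)) :
    ∀ t₁ ∈ Ioi (0:ℝ), ∀ t₂ ∈ Ioi (0:ℝ),
      (∫ θ in (0:ℝ)..(2 * π), t₁ * Real.exp (2 * P t₁ θ) * pt χ t₁ θ)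
        = ∫ θ in (0:ℝ)..(2 * π), t₂ * Real.exp (2 * P t₂ θ) * pt χ t₂ θ := by
  classical
  set Fc : ℝ → ℝ → ℝ := fun s θ => s * Real.exp (2 * P s θ) * pt χ s θ with hFc
  set Gc : ℝ → ℝ → ℝ := fun s θ => s * Real.exp (2 * P s θ) * px χ s θ with hGc
  -- smoothness of the auxiliary functions
  have hexpP : ContDiffOn ℝ (⊤ : ℕ∞) (fun p : ℝ × ℝ => Real.exp (2 * P p.1 p.2))
      (Ioi 0 ×ˢ univ) :=
    (Real.contDiff_exp.comp_contDiffOn (contDiffOn_const.mul hP))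
  have hFsm : ContDiffOn ℝ (⊤ : ℕ∞) (Function.uncurry Fc) (Ioi 0 ×ˢ univ) :=
    ((contDiff_fst.contDiffOn.mul hexpP).mul (contDiffOn_pt hχ))
  have hGsm : ContDiffOn ℝ (⊤ : ℕ∞) (Function.uncurry Gc) (Ioi 0 ×ˢ univ) :=
    ((contDiff_fst.contDiffOn.mul hexpP).mul (contDiffOn_px hχ))
  -- the key pointwise derivative identity:
  -- ∂ₜ Fc = ∂θ Gc for t > 0
  have key : ∀ t : ℝ, 0 < t → ∀ θ : ℝ,
      HasDerivAt (fun s => Fc s θ) (px Gc t θ) t := by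
    intro t ht θ
    have ht' : t ≠ 0 := ne_of_gt ht
    have hPt := hasDerivAt_pt hP ht θ
    have hPx := hasDerivAt_px hP ht θ
    have hχt := hasDerivAt_pt hχ ht θ
    have hχtt := hasDerivAt_pt (contDiffOn_pt hχ) ht θ
    have hχxx := hasDerivAt_px (contDiffOn_px hχ) ht θ
    set e := Real.exp (2 * P t θ) with he
    -- derivative in t of Fc
    have hexp_t : HasDerivAt (fun s => Real.exp (2 * P s θ)) (e * (2 * pt P t θ)) t :=
      (hPt.const_mul 2).exp
    have h1 : HasDerivAt (fun s => s * Real.exp (2 * P s θ))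
        (1 * e + t * (e * (2 * pt P t θ))) t := (hasDerivAt_id t).mul hexp_t
    have hA : HasDerivAt (fun s => Fc s θ)
        ((1 * e + t * (e * (2 * pt P t θ))) * pt χ t θ + t * e * pt (pt χ) t θ) t :=
      h1.mul hχtt
    -- derivative in θ of Gc
    have hexp_x : HasDerivAt (fun x => Real.exp (2 * P t x)) (e * (2 * px P t θ)) θ :=
      (hPx.const_mul 2).exp
    have h2 : HasDerivAt (fun x => t * Real.exp (2 * P t x))
        (t * (e * (2 * px P t θ))) θ := hexp_x.const_mul t
    have hB : HasDerivAt (fun x => Gc t x)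
        (t * (e * (2 * px P t θ)) * px χ t θ + t * e * px (px χ) t θ) θ :=
      h2.mul hχxx
    have hpxG : px Gc t θ
        = t * (e * (2 * px P t θ)) * px χ t θ + t * e * px (px χ) t θ := hB.deriv
    rw [hpxG]
    convert hA using 1
    have h8 := heq8 t ht θ
    have hinv : t * t⁻¹ = 1 := mul_inv_cancel₀ ht'
    linear_combination (-(t * e)) * h8 + (e * pt χ t θ) * hinv
  -- the derivative of Q at each t > 0 is ∫ ∂θ Gc dθ
  have hQderiv : ∀ t : ℝ, 0 < t →
      HasDerivAt (fun s => ∫ θ in (0:ℝ)..(2 * π), Fc s θ)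
        (∫ θ in (0:ℝ)..(2 * π), px Gc t θ) t := by
    intro t₀ ht₀
    have hεpos : (0:ℝ) < t₀ / 2 := by linarith
    -- compact set containing ball × interval
    have hπ : (0:ℝ) < π := Real.pi_pos
    set K : Set (ℝ × ℝ) := Icc (t₀ / 2) (2 * t₀) ×ˢ Icc (0 : ℝ) (2 * π) with hK
    have hKc : IsCompact K := (isCompact_Icc.prod isCompact_Icc)
    have hKS : K ⊆ Ioi 0 ×ˢ univ := fun p hp => ⟨lt_of_lt_of_le hεpos hp.1.1, trivial⟩
    have hcontpxG : ContinuousOn (Function.uncurry (px Gc)) (Ioi 0 ×ˢ univ) :=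
      (contDiffOn_px hGsm).continuousOn
    obtain ⟨C, hC⟩ := hKc.exists_bound_of_continuousOn (hcontpxG.mono hKS)
    have hball : ∀ s ∈ Metric.ball t₀ (t₀ / 2), s ∈ Icc (t₀ / 2) (2 * t₀) ∧ 0 < s := by
      intro s hs
      rw [Metric.mem_ball, Real.dist_eq, abs_lt] at hs
      refine ⟨⟨by linarith, by linarith⟩, by linarith⟩
    have hIsub : Set.uIoc (0:ℝ) (2 * π) ⊆ Icc (0:ℝ) (2 * π) := by
      rw [uIoc_of_le (by positivity)]
      exact Ioc_subset_Icc_self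
    have hmain := intervalIntegral.hasDerivAt_integral_of_dominated_loc_of_deriv_le
      (F := Fc) (F' := fun s θ => px Gc s θ) (x₀ := t₀) (a := (0:ℝ)) (b := 2 * π) (μ := volume)
      (bound := fun _ => C) (Metric.ball_mem_nhds t₀ hεpos)
      ?_ ?_ ?_ ?_ ?_ ?_
    · exact hmain.2
    · -- measurability of Fc s near t₀
      filter_upwards [isOpen_Ioi.mem_nhds ht₀] with s hs
      exact ((continuous_slice hFsm hs)).aestronglyMeasurable
    · exact (continuous_slice hFsm ht₀).intervalIntegrable _ _
    · exact (continuous_slice (contDiffOn_px hGsm) ht₀).aestronglyMeasurable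
    · refine Filter.Eventually.of_forall fun θ hθ s hs => ?_
      exact hC (s, θ) ⟨(hball s hs).1, hIsub hθ⟩
    · exact intervalIntegrable_const
    · refine Filter.Eventually.of_forall fun θ hθ s hs => ?_
      exact key s (hball s hs).2 θ
  -- the θ-integral of ∂θ Gc vanishes by periodicity
  have hzero : ∀ t : ℝ, 0 < t → (∫ θ in (0:ℝ)..(2 * π), px Gc t θ) = 0 := by
    intro t ht
    have hftc : (∫ θ in (0:ℝ)..(2 * π), px Gc t θ) = Gc t (2 * π) - Gc t 0 := by
      apply intervalIntegral.integral_eq_sub_of_hasDerivAt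
      · intro x _
        exact hasDerivAt_px hGsm ht x
      · exact (continuous_slice (contDiffOn_px hGsm) ht).intervalIntegrable _ _
    have hper : Gc t (2 * π) = Gc t 0 := by
      have hχx : px χ t (2 * π) = px χ t 0 := by
        have : (fun x => χ t (x + 2 * π)) = fun x => χ t x := funext fun x => hχper t x
        calc px χ t (2 * π) = deriv (fun x => χ t x) (0 + 2 * π) := by rw [zero_add]; rfl
          _ = deriv (fun x => χ t (x + 2 * π)) 0 := (deriv_comp_add_const _ _ _).symm
          _ = px χ t 0 := by rw [this]; rfl
      have hPp : P t (2 * π) = P t 0 := by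
        have := hPper t 0; rwa [zero_add] at this
      simp only [hGc, hχx, hPp]
    rw [hftc, hper, sub_self]
  -- conclude: the function is constant on (0, ∞)
  have hconst : ∀ a : ℝ, 0 < a → ∀ b : ℝ, 0 < b → a ≤ b →
      (∫ θ in (0:ℝ)..(2 * π), Fc b θ) = ∫ θ in (0:ℝ)..(2 * π), Fc a θ := by
    intro a ha b hb hab
    have := constant_of_has_deriv_right_zero
      (f := fun s => ∫ θ in (0:ℝ)..(2 * π), Fc s θ) (a := a) (b := b)
      (fun x hx => by
        have hx0 : 0 < x := lt_of_lt_of_le ha hx.1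
        have h := hQderiv x hx0
        rw [hzero x hx0] at h
        exact h.continuousAt.continuousWithinAt)
      (fun x hx => by
        have hx0 : 0 < x := lt_of_lt_of_le ha hx.1
        have h := hQderiv x hx0
        rw [hzero x hx0] at h
        exact h.hasDerivWithinAt)
    exact this b ⟨hab, le_refl b⟩
  intro t₁ ht₁ t₂ ht₂
  rcases le_total t₁ t₂ with h | h
  · exact (hconst t₁ ht₁ t₂ ht₂ h).symm
  · exact hconst t₂ ht₂ t₁ ht₁ h
end

section
/- Let P̄, χ : (0,∞) × ℝ → ℝ be smooth, 2π-periodic in θ, and satisfy the evolution equations (7) and (8). Define the energy E(t) = ∫₀^{2π} [P̄_t² + P̄_θ² + e^{2P̄}(χ_t² + χ_θ²)](t,θ) dθ. Then E is differentiable on (0,∞) with E′(t) = −(2/t) ∫₀^{2π} (P̄_t² + e^{2P̄} χ_t²)(t,θ) dθ ≤ 0; in particular E is nonincreasing on (0,∞). -/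
open Real Set MeasureTheory intervalIntegral
open Topology Filter

lemma aux_fst {g : ℝ × ℝ → ℝ} {t θ : ℝ} (hg : DifferentiableAt ℝ g (t, θ)) :
    HasDerivAt (fun s => g (s, θ)) (fderiv ℝ g (t, θ) (1, 0)) t := by
  have h1 : HasDerivAt (fun s : ℝ => (s, θ)) ((1 : ℝ), (0 : ℝ)) t :=
    (hasDerivAt_id t).prodMk (hasDerivAt_const t θ)
  exact hg.hasFDerivAt.comp_hasDerivAt t h1

lemma aux_snd {g : ℝ × ℝ → ℝ} {t θ : ℝ} (hg : DifferentiableAt ℝ g (t, θ)) :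
    HasDerivAt (fun x => g (t, x)) (fderiv ℝ g (t, θ) (0, 1)) θ := by
  have h1 : HasDerivAt (fun x : ℝ => (t, x)) ((0 : ℝ), (1 : ℝ)) θ :=
    (hasDerivAt_const θ t).prodMk (hasDerivAt_id θ)
  exact hg.hasFDerivAt.comp_hasDerivAt θ h1

lemma key {f : ℝ → ℝ → ℝ}
    (hf : ContDiffOn ℝ (⊤ : ℕ∞) (Function.uncurry f) (Ioi 0 ×ˢ univ)) :
    ContDiffOn ℝ (⊤ : ℕ∞) (Function.uncurry (pt f)) (Ioi 0 ×ˢ univ) ∧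
    ContDiffOn ℝ (⊤ : ℕ∞) (Function.uncurry (px f)) (Ioi 0 ×ˢ univ) ∧
    (∀ t θ : ℝ, (t, θ) ∈ (Ioi (0:ℝ) ×ˢ (univ : Set ℝ)) →
       HasDerivAt (fun s => f s θ) (pt f t θ) t) ∧
    (∀ t θ : ℝ, (t, θ) ∈ (Ioi (0:ℝ) ×ˢ (univ : Set ℝ)) →
       HasDerivAt (fun x => f t x) (px f t θ) θ) := by
  have hO : IsOpen (Ioi (0:ℝ) ×ˢ (univ : Set ℝ)) := isOpen_Ioi.prod isOpen_univ
  have hdiff : ∀ p ∈ (Ioi (0:ℝ) ×ˢ (univ : Set ℝ)),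
      DifferentiableAt ℝ (Function.uncurry f) p := fun p hp =>
    (hf.contDiffAt (hO.mem_nhds hp)).differentiableAt (by simp)
  have hDf : ContDiffOn ℝ (⊤ : ℕ∞) (fderiv ℝ (Function.uncurry f)) (Ioi 0 ×ˢ univ) :=
    hf.fderiv_of_isOpen hO (by simp)
  have hdt : ∀ t θ : ℝ, (t, θ) ∈ (Ioi (0:ℝ) ×ˢ (univ : Set ℝ)) →
      HasDerivAt (fun s => f s θ) (pt f t θ) t := by
    intro t θ hp
    have h := aux_fst (hdiff _ hp)
    have : pt f t θ = fderiv ℝ (Function.uncurry f) (t, θ) (1, 0) := h.deriv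
    rw [this]; exact h
  have hdx : ∀ t θ : ℝ, (t, θ) ∈ (Ioi (0:ℝ) ×ˢ (univ : Set ℝ)) →
      HasDerivAt (fun x => f t x) (px f t θ) θ := by
    intro t θ hp
    have h := aux_snd (hdiff _ hp)
    have : px f t θ = fderiv ℝ (Function.uncurry f) (t, θ) (0, 1) := h.deriv
    rw [this]; exact h
  refine ⟨?_, ?_, hdt, hdx⟩
  · have hc : ContDiffOn ℝ (⊤ : ℕ∞) (fun p => fderiv ℝ (Function.uncurry f) p ((1:ℝ), (0:ℝ)))
        (Ioi 0 ×ˢ univ) := hDf.clm_apply contDiffOn_const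
    refine hc.congr fun p hp => ?_
    have h := aux_fst (g := Function.uncurry f) (t := p.1) (θ := p.2) (by simpa using hdiff p hp)
    simpa [Function.uncurry, pt] using h.deriv
  · have hc : ContDiffOn ℝ (⊤ : ℕ∞) (fun p => fderiv ℝ (Function.uncurry f) p ((0:ℝ), (1:ℝ)))
        (Ioi 0 ×ˢ univ) := hDf.clm_apply contDiffOn_const
    refine hc.congr fun p hp => ?_
    have h := aux_snd (g := Function.uncurry f) (t := p.1) (θ := p.2) (by simpa using hdiff p hp)
    simpa [Function.uncurry, px] using h.deriv

lemma clairaut {f : ℝ → ℝ → ℝ}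
    (hf : ContDiffOn ℝ (⊤ : ℕ∞) (Function.uncurry f) (Ioi 0 ×ˢ univ)) :
    ∀ t θ : ℝ, (t, θ) ∈ (Ioi (0:ℝ) ×ˢ (univ : Set ℝ)) →
      pt (px f) t θ = px (pt f) t θ := by
  intro t θ hp
  have hO : IsOpen (Ioi (0:ℝ) ×ˢ (univ : Set ℝ)) := isOpen_Ioi.prod isOpen_univ
  set g := Function.uncurry f with hg
  set Df := fderiv ℝ g with hDfdef
  have hmem : (Ioi (0:ℝ) ×ˢ (univ : Set ℝ)) ∈ 𝓝 (t, θ) := hO.mem_nhds hp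
  have hdiff : ∀ q ∈ (Ioi (0:ℝ) ×ˢ (univ : Set ℝ)), DifferentiableAt ℝ g q := fun q hq =>
    (hf.contDiffAt (hO.mem_nhds hq)).differentiableAt (by simp)
  have hev : ∀ᶠ y in 𝓝 (t, θ), HasFDerivAt g (Df y) y := by
    filter_upwards [hmem] with y hy using (hdiff y hy).hasFDerivAt
  have hDf : ContDiffOn ℝ (⊤ : ℕ∞) Df (Ioi 0 ×ˢ univ) := hf.fderiv_of_isOpen hO (by simp)
  have hf'' : HasFDerivAt Df (fderiv ℝ Df (t, θ)) (t, θ) :=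
    ((hDf.contDiffAt hmem).differentiableAt (by simp)).hasFDerivAt
  set f'' := fderiv ℝ Df (t, θ) with hf''def
  have hsymm := second_derivative_symmetric_of_eventually hev hf''
  have hA : HasFDerivAt (fun q => Df q ((0:ℝ), (1:ℝ)))
      ((Df (t, θ)).comp (0 : ℝ × ℝ →L[ℝ] ℝ × ℝ) + f''.flip ((0:ℝ), (1:ℝ))) (t, θ) :=
    hf''.clm_apply (hasFDerivAt_const _ _)
  have hB : HasFDerivAt (fun q => Df q ((1:ℝ), (0:ℝ)))
      ((Df (t, θ)).comp (0 : ℝ × ℝ →L[ℝ] ℝ × ℝ) + f''.flip ((1:ℝ), (0:ℝ))) (t, θ) :=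
    hf''.clm_apply (hasFDerivAt_const _ _)
  have hsnhd : {s : ℝ | (s, θ) ∈ (Ioi (0:ℝ) ×ˢ (univ : Set ℝ))} ∈ 𝓝 t := by
    have : Continuous (fun s : ℝ => (s, θ)) := continuous_id.prodMk continuous_const
    exact this.continuousAt.preimage_mem_nhds hmem
  have hxnhd : {x : ℝ | (t, x) ∈ (Ioi (0:ℝ) ×ˢ (univ : Set ℝ))} ∈ 𝓝 θ := by
    have : Continuous (fun x : ℝ => (t, x)) := continuous_const.prodMk continuous_id
    exact this.continuousAt.preimage_mem_nhds hmem
  have e1 : (fun s => px f s θ) =ᶠ[𝓝 t] (fun s => Df (s, θ) ((0:ℝ), (1:ℝ))) := by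
    filter_upwards [hsnhd] with s hs
    exact (aux_snd (hdiff _ hs)).deriv
  have e2 : (fun x => pt f t x) =ᶠ[𝓝 θ] (fun x => Df (t, x) ((1:ℝ), (0:ℝ))) := by
    filter_upwards [hxnhd] with x hx
    exact (aux_fst (hdiff _ hx)).deriv
  have h1 : pt (px f) t θ = f'' (1, 0) (0, 1) := by
    have hh := (aux_fst (g := fun q => Df q ((0:ℝ), (1:ℝ))) (t := t) (θ := θ)
      hA.differentiableAt).deriv
    rw [hA.fderiv] at hh
    calc pt (px f) t θ = deriv (fun s => Df (s, θ) ((0:ℝ), (1:ℝ))) t := e1.deriv_eq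
      _ = f'' (1, 0) (0, 1) := by rw [hh]; simp
  have h2 : px (pt f) t θ = f'' (0, 1) (1, 0) := by
    have hh := (aux_snd (g := fun q => Df q ((1:ℝ), (0:ℝ))) (t := t) (θ := θ)
      hB.differentiableAt).deriv
    rw [hB.fderiv] at hh
    calc px (pt f) t θ = deriv (fun x => Df (t, x) ((1:ℝ), (0:ℝ))) θ := e2.deriv_eq
      _ = f'' (0, 1) (1, 0) := by rw [hh]; simp
  rw [h1, h2, hsymm]

lemma per_pt {f : ℝ → ℝ → ℝ} (h : ∀ t θ : ℝ, f t (θ + 2 * π) = f t θ) :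
    ∀ t θ : ℝ, pt f t (θ + 2 * π) = pt f t θ := by
  intro t θ
  unfold pt
  congr 1
  funext s
  exact h s θ

lemma per_px {f : ℝ → ℝ → ℝ} (h : ∀ t θ : ℝ, f t (θ + 2 * π) = f t θ) :
    ∀ t θ : ℝ, px f t (θ + 2 * π) = px f t θ := by
  intro t θ
  unfold px
  have h1 : deriv (fun x => f t x) (θ + 2 * π) = deriv (fun x => f t (x + 2 * π)) θ :=
    (deriv_comp_add_const (fun x => f t x) (2 * π) θ).symm
  rw [h1]
  congr 1
  funext x
  exact h t x

/-- energy density -/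
noncomputable def eE (P χ : ℝ → ℝ → ℝ) (t θ : ℝ) : ℝ :=
  (pt P t θ) ^ 2 + (px P t θ) ^ 2
    + Real.exp (2 * P t θ) * ((pt χ t θ) ^ 2 + (px χ t θ) ^ 2)

/-- kinetic density -/
noncomputable def h0E (P χ : ℝ → ℝ → ℝ) (t θ : ℝ) : ℝ :=
  (pt P t θ) ^ 2 + Real.exp (2 * P t θ) * (pt χ t θ) ^ 2

/-- time derivative of the energy density -/
noncomputable def e'E (P χ : ℝ → ℝ → ℝ) (t θ : ℝ) : ℝ :=
  2 * pt P t θ * pt (pt P) t θ + 2 * px P t θ * pt (px P) t θ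
    + 2 * pt P t θ * Real.exp (2 * P t θ) * ((pt χ t θ) ^ 2 + (px χ t θ) ^ 2)
    + Real.exp (2 * P t θ) * (2 * pt χ t θ * pt (pt χ) t θ + 2 * px χ t θ * pt (px χ) t θ)

/-- flux -/
noncomputable def GE (P χ : ℝ → ℝ → ℝ) (t θ : ℝ) : ℝ :=
  2 * pt P t θ * px P t θ + 2 * Real.exp (2 * P t θ) * pt χ t θ * px χ t θ

/-- space derivative of the flux -/
noncomputable def dE (P χ : ℝ → ℝ → ℝ) (t θ : ℝ) : ℝ :=
  2 * px (pt P) t θ * px P t θ + 2 * pt P t θ * px (px P) t θ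
    + 4 * px P t θ * Real.exp (2 * P t θ) * pt χ t θ * px χ t θ
    + 2 * Real.exp (2 * P t θ) * (px (pt χ) t θ * px χ t θ + pt χ t θ * px (px χ) t θ)

variable {P χ : ℝ → ℝ → ℝ}

lemma conts (hP : ContDiffOn ℝ (⊤ : ℕ∞) (Function.uncurry P) (Ioi 0 ×ˢ univ))
    (hχ : ContDiffOn ℝ (⊤ : ℕ∞) (Function.uncurry χ) (Ioi 0 ×ˢ univ)) :
    ContinuousOn (fun p : ℝ × ℝ => eE P χ p.1 p.2) (Ioi 0 ×ˢ univ) ∧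
    ContinuousOn (fun p : ℝ × ℝ => h0E P χ p.1 p.2) (Ioi 0 ×ˢ univ) ∧
    ContinuousOn (fun p : ℝ × ℝ => e'E P χ p.1 p.2) (Ioi 0 ×ˢ univ) ∧
    ContinuousOn (fun p : ℝ × ℝ => dE P χ p.1 p.2) (Ioi 0 ×ˢ univ) := by
  obtain ⟨hPt_s, hPx_s, -, -⟩ := key hP
  obtain ⟨hχt_s, hχx_s, -, -⟩ := key hχ
  obtain ⟨hPtt_s, hPtx_s, -, -⟩ := key hPt_s
  obtain ⟨hPxt_s, hPxx_s, -, -⟩ := key hPx_s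
  obtain ⟨hχtt_s, hχtx_s, -, -⟩ := key hχt_s
  obtain ⟨hχxt_s, hχxx_s, -, -⟩ := key hχx_s
  have cP : ContinuousOn (fun p : ℝ × ℝ => P p.1 p.2) (Ioi 0 ×ˢ univ) := hP.continuousOn
  have cPt : ContinuousOn (fun p : ℝ × ℝ => pt P p.1 p.2) (Ioi 0 ×ˢ univ) := hPt_s.continuousOn
  have cPx : ContinuousOn (fun p : ℝ × ℝ => px P p.1 p.2) (Ioi 0 ×ˢ univ) := hPx_s.continuousOn
  have cPtt : ContinuousOn (fun p : ℝ × ℝ => pt (pt P) p.1 p.2) (Ioi 0 ×ˢ univ) :=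
    hPtt_s.continuousOn
  have cPtx : ContinuousOn (fun p : ℝ × ℝ => pt (px P) p.1 p.2) (Ioi 0 ×ˢ univ) :=
    hPxt_s.continuousOn
  have cPxt : ContinuousOn (fun p : ℝ × ℝ => px (pt P) p.1 p.2) (Ioi 0 ×ˢ univ) :=
    hPtx_s.continuousOn
  have cPxx : ContinuousOn (fun p : ℝ × ℝ => px (px P) p.1 p.2) (Ioi 0 ×ˢ univ) :=
    hPxx_s.continuousOn
  have cχt : ContinuousOn (fun p : ℝ × ℝ => pt χ p.1 p.2) (Ioi 0 ×ˢ univ) := hχt_s.continuousOn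
  have cχx : ContinuousOn (fun p : ℝ × ℝ => px χ p.1 p.2) (Ioi 0 ×ˢ univ) := hχx_s.continuousOn
  have cχtt : ContinuousOn (fun p : ℝ × ℝ => pt (pt χ) p.1 p.2) (Ioi 0 ×ˢ univ) :=
    hχtt_s.continuousOn
  have cχtx : ContinuousOn (fun p : ℝ × ℝ => pt (px χ) p.1 p.2) (Ioi 0 ×ˢ univ) :=
    hχxt_s.continuousOn
  have cχxt : ContinuousOn (fun p : ℝ × ℝ => px (pt χ) p.1 p.2) (Ioi 0 ×ˢ univ) :=
    hχtx_s.continuousOn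
  have cχxx : ContinuousOn (fun p : ℝ × ℝ => px (px χ) p.1 p.2) (Ioi 0 ×ˢ univ) :=
    hχxx_s.continuousOn
  have cExp : ContinuousOn (fun p : ℝ × ℝ => Real.exp (2 * P p.1 p.2)) (Ioi 0 ×ˢ univ) :=
    Real.continuous_exp.comp_continuousOn (continuousOn_const.mul cP)
  refine ⟨?_, ?_, ?_, ?_⟩
  · exact ((cPt.pow 2).add (cPx.pow 2)).add (cExp.mul ((cχt.pow 2).add (cχx.pow 2)))
  · exact (cPt.pow 2).add (cExp.mul (cχt.pow 2))
  · exact ((((continuousOn_const.mul cPt).mul cPtt).add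
      ((continuousOn_const.mul cPx).mul cPtx)).add
      (((continuousOn_const.mul cPt).mul cExp).mul ((cχt.pow 2).add (cχx.pow 2)))).add
      (cExp.mul (((continuousOn_const.mul cχt).mul cχtt).add
      ((continuousOn_const.mul cχx).mul cχtx)))
  · exact ((((continuousOn_const.mul cPxt).mul cPx).add
      ((continuousOn_const.mul cPt).mul cPxx)).add
      ((((continuousOn_const.mul cPx).mul cExp).mul cχt).mul cχx)).add
      ((continuousOn_const.mul cExp).mul ((cχxt.mul cχx).add (cχt.mul cχxx)))

lemma hasDerivAt_eE (hP : ContDiffOn ℝ (⊤ : ℕ∞) (Function.uncurry P) (Ioi 0 ×ˢ univ))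
    (hχ : ContDiffOn ℝ (⊤ : ℕ∞) (Function.uncurry χ) (Ioi 0 ×ˢ univ)) :
    ∀ t θ : ℝ, (t, θ) ∈ (Ioi (0:ℝ) ×ˢ (univ : Set ℝ)) →
      HasDerivAt (fun s => eE P χ s θ) (e'E P χ t θ) t := by
  obtain ⟨hPt_s, hPx_s, hPdt, -⟩ := key hP
  obtain ⟨hχt_s, hχx_s, hχdt, -⟩ := key hχ
  obtain ⟨-, -, hPtdt, -⟩ := key hPt_s
  obtain ⟨-, -, hPxdt, -⟩ := key hPx_s
  obtain ⟨-, -, hχtdt, -⟩ := key hχt_s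
  obtain ⟨-, -, hχxdt, -⟩ := key hχx_s
  intro t θ hp
  have h0 := hPdt t θ hp
  have h1 := hPtdt t θ hp
  have h2 := hPxdt t θ hp
  have k0 := hχdt t θ hp
  have k1 := hχtdt t θ hp
  have k2 := hχxdt t θ hp
  have := ((h1.pow 2).add (h2.pow 2)).add
    (((h0.const_mul 2).exp).mul ((k1.pow 2).add (k2.pow 2)))
  refine this.congr_deriv ?_
  simp only [e'E, Nat.cast_ofNat, Pi.add_apply, Pi.mul_apply, Pi.pow_apply]
  ring

lemma hasDerivAt_GE (hP : ContDiffOn ℝ (⊤ : ℕ∞) (Function.uncurry P) (Ioi 0 ×ˢ univ))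
    (hχ : ContDiffOn ℝ (⊤ : ℕ∞) (Function.uncurry χ) (Ioi 0 ×ˢ univ)) :
    ∀ t θ : ℝ, (t, θ) ∈ (Ioi (0:ℝ) ×ˢ (univ : Set ℝ)) →
      HasDerivAt (fun x => GE P χ t x) (dE P χ t θ) θ := by
  obtain ⟨hPt_s, hPx_s, -, hPdx⟩ := key hP
  obtain ⟨hχt_s, hχx_s, -, hχdx⟩ := key hχ
  obtain ⟨-, -, -, hPtdx⟩ := key hPt_s
  obtain ⟨-, -, -, hPxdx⟩ := key hPx_s
  obtain ⟨-, -, -, hχtdx⟩ := key hχt_s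
  obtain ⟨-, -, -, hχxdx⟩ := key hχx_s
  intro t θ hp
  have h0 := hPdx t θ hp
  have h1 := hPtdx t θ hp
  have h2 := hPxdx t θ hp
  have k0 := hχdx t θ hp
  have k1 := hχtdx t θ hp
  have k2 := hχxdx t θ hp
  have := ((h1.const_mul 2).mul h2).add
    ((((h0.const_mul 2).exp.const_mul 2).mul k1).mul k2)
  refine this.congr_deriv ?_
  simp only [dE, Pi.add_apply, Pi.mul_apply]
  ring

lemma identity_e' (hP : ContDiffOn ℝ (⊤ : ℕ∞) (Function.uncurry P) (Ioi 0 ×ˢ univ))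
    (hχ : ContDiffOn ℝ (⊤ : ℕ∞) (Function.uncurry χ) (Ioi 0 ×ˢ univ))
    (heq7 : ∀ t ∈ Ioi (0:ℝ), ∀ θ : ℝ,
      pt (pt P) t θ + t⁻¹ * pt P t θ - px (px P) t θ
        = Real.exp (2 * P t θ) * ((pt χ t θ) ^ 2 - (px χ t θ) ^ 2))
    (heq8 : ∀ t ∈ Ioi (0:ℝ), ∀ θ : ℝ,
      pt (pt χ) t θ + t⁻¹ * pt χ t θ - px (px χ) t θ
        = -2 * (pt P t θ * pt χ t θ - px P t θ * px χ t θ)) :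
    ∀ t ∈ Ioi (0:ℝ), ∀ θ : ℝ,
      e'E P χ t θ = -(2 / t) * h0E P χ t θ + dE P χ t θ := by
  intro t ht θ
  have hp : (t, θ) ∈ (Ioi (0:ℝ) ×ˢ (univ : Set ℝ)) := ⟨ht, mem_univ θ⟩
  have hcP := clairaut hP t θ hp
  have hcχ := clairaut hχ t θ hp
  have hq7 := heq7 t ht θ
  have hq8 := heq8 t ht θ
  simp only [e'E, h0E, dE]
  linear_combination (2 * pt P t θ) * hq7 + (2 * Real.exp (2 * P t θ) * pt χ t θ) * hq8
    + (2 * px P t θ) * hcP + (2 * Real.exp (2 * P t θ) * px χ t θ) * hcχ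

/-- The energy `E(t) = ∫₀^{2π} [P̄_t² + P̄_θ² + e^{2P̄}(χ_t² + χ_θ²)] dθ` is
differentiable with `E'(t) = −(2/t)∫₀^{2π}(P̄_t² + e^{2P̄}χ_t²) dθ ≤ 0`,
hence nonincreasing on `(0,∞)`. -/
theorem energy_monotone (P χ : ℝ → ℝ → ℝ)
    (hP : ContDiffOn ℝ (⊤ : ℕ∞) (Function.uncurry P) (Ioi 0 ×ˢ univ))
    (hχ : ContDiffOn ℝ (⊤ : ℕ∞) (Function.uncurry χ) (Ioi 0 ×ˢ univ))
    (hPper : ∀ t θ : ℝ, P t (θ + 2 * π) = P t θ)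
    (hχper : ∀ t θ : ℝ, χ t (θ + 2 * π) = χ t θ)
    (heq7 : ∀ t ∈ Ioi (0:ℝ), ∀ θ : ℝ,
      pt (pt P) t θ + t⁻¹ * pt P t θ - px (px P) t θ
        = Real.exp (2 * P t θ) * ((pt χ t θ) ^ 2 - (px χ t θ) ^ 2))
    (heq8 : ∀ t ∈ Ioi (0:ℝ), ∀ θ : ℝ,
      pt (pt χ) t θ + t⁻¹ * pt χ t θ - px (px χ) t θ
        = -2 * (pt P t θ * pt χ t θ - px P t θ * px χ t θ))
    (E : ℝ → ℝ)
    (hE : ∀ t : ℝ, E t = ∫ θ in (0:ℝ)..(2 * π),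
      ((pt P t θ) ^ 2 + (px P t θ) ^ 2
        + Real.exp (2 * P t θ) * ((pt χ t θ) ^ 2 + (px χ t θ) ^ 2))) :
    (∀ t ∈ Ioi (0:ℝ),
      HasDerivAt E
        (-(2 / t) * ∫ θ in (0:ℝ)..(2 * π),
          ((pt P t θ) ^ 2 + Real.exp (2 * P t θ) * (pt χ t θ) ^ 2)) t ∧
      (-(2 / t) * ∫ θ in (0:ℝ)..(2 * π),
          ((pt P t θ) ^ 2 + Real.exp (2 * P t θ) * (pt χ t θ) ^ 2)) ≤ 0) ∧
    ∀ t₁ ∈ Ioi (0:ℝ), ∀ t₂ ∈ Ioi (0:ℝ), t₁ ≤ t₂ → E t₂ ≤ E t₁ := by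
  have pi_pos := Real.pi_pos
  have h2pi : (0:ℝ) ≤ 2 * π := by linarith
  obtain ⟨cE, cH0, cE', cD⟩ := conts hP hχ
  -- E is the integral of eE
  have hEeq : E = fun x => ∫ θ in (0:ℝ)..(2 * π), eE P χ x θ := by
    funext x; rw [hE x]; rfl
  -- flux periodicity
  have hGper : ∀ t : ℝ, GE P χ t (2 * π) = GE P χ t 0 := by
    intro t
    have h2 : (2 * π : ℝ) = 0 + 2 * π := by ring
    rw [h2]
    simp only [GE, per_pt hPper, per_px hPper, per_pt hχper, per_px hχper, hPper]
  -- pointwise continuity in θ for fixed positive time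
  have contθ : ∀ {f : ℝ × ℝ → ℝ}, ContinuousOn f (Ioi 0 ×ˢ univ) → ∀ t ∈ Ioi (0:ℝ),
      Continuous (fun θ : ℝ => f (t, θ)) := by
    intro f hf t ht
    exact hf.comp_continuous (continuous_const.prodMk continuous_id)
      (fun θ => ⟨ht, mem_univ θ⟩)
  -- flux integral vanishes
  have hflux : ∀ t ∈ Ioi (0:ℝ), ∫ θ in (0:ℝ)..(2 * π), dE P χ t θ = 0 := by
    intro t ht
    have hint : IntervalIntegrable (fun θ => dE P χ t θ) volume 0 (2 * π) :=
      (contθ cD t ht).intervalIntegrable _ _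
    have := intervalIntegral.integral_eq_sub_of_hasDerivAt
      (f := fun x => GE P χ t x) (f' := fun θ => dE P χ t θ)
      (fun θ _ => hasDerivAt_GE hP hχ t θ ⟨ht, mem_univ θ⟩) hint
    simpa [hGper t] using this
  -- the main derivative computation
  have main : ∀ t ∈ Ioi (0:ℝ),
      HasDerivAt E
        (-(2 / t) * ∫ θ in (0:ℝ)..(2 * π),
          ((pt P t θ) ^ 2 + Real.exp (2 * P t θ) * (pt χ t θ) ^ 2)) t := by
    intro t₀ ht₀
    have ht₀' : (0:ℝ) < t₀ := ht₀
    have hball : ∀ x ∈ Metric.ball t₀ (t₀ / 2),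
        x ∈ Ioi (0:ℝ) ∧ x ∈ Icc (t₀ / 2) (t₀ + t₀ / 2) := by
      intro x hx
      rw [Metric.mem_ball, Real.dist_eq, abs_lt] at hx
      refine ⟨by simp only [mem_Ioi]; linarith, ⟨by linarith, by linarith⟩⟩
    have hKc : IsCompact (Icc (t₀ / 2) (t₀ + t₀ / 2) ×ˢ Icc (0:ℝ) (2 * π)) :=
      isCompact_Icc.prod isCompact_Icc
    have hKO : (Icc (t₀ / 2) (t₀ + t₀ / 2) ×ˢ Icc (0:ℝ) (2 * π)) ⊆ Ioi 0 ×ˢ univ := by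
      intro p hp
      exact ⟨lt_of_lt_of_le (by linarith) hp.1.1, mem_univ _⟩
    obtain ⟨C, hC⟩ := hKc.exists_bound_of_continuousOn (cE'.mono hKO)
    have hres := intervalIntegral.hasDerivAt_integral_of_dominated_loc_of_deriv_le
      (F := fun x θ => eE P χ x θ) (F' := fun x θ => e'E P χ x θ) (bound := fun _ => C)
      (μ := volume) (a := (0:ℝ)) (b := 2 * π) (x₀ := t₀)
      (Metric.ball_mem_nhds t₀ (by linarith : (0:ℝ) < t₀ / 2))
      (by
        filter_upwards [isOpen_Ioi.eventually_mem ht₀] with x hx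
        exact (contθ cE x hx).aestronglyMeasurable)
      ((contθ cE t₀ ht₀).intervalIntegrable _ _)
      (contθ cE' t₀ ht₀).aestronglyMeasurable
      (Eventually.of_forall (fun θ hθ x hx => by
        have hθ' : θ ∈ Icc (0:ℝ) (2 * π) := by
          rw [uIoc_of_le h2pi] at hθ
          exact ⟨le_of_lt hθ.1, hθ.2⟩
        exact hC (x, θ) ⟨(hball x hx).2, hθ'⟩))
      intervalIntegrable_const
      (Eventually.of_forall (fun θ _ x hx =>
        hasDerivAt_eE hP hχ x θ ⟨(hball x hx).1, mem_univ θ⟩))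
    have hD := hres.2
    have hint1 : IntervalIntegrable (fun θ => -(2 / t₀) * h0E P χ t₀ θ) volume 0 (2 * π) :=
      (continuous_const.mul (contθ cH0 t₀ ht₀)).intervalIntegrable _ _
    have hint2 : IntervalIntegrable (fun θ => dE P χ t₀ θ) volume 0 (2 * π) :=
      (contθ cD t₀ ht₀).intervalIntegrable _ _
    have hiv : (∫ θ in (0:ℝ)..(2 * π), e'E P χ t₀ θ)
        = -(2 / t₀) * ∫ θ in (0:ℝ)..(2 * π), h0E P χ t₀ θ := by
      rw [intervalIntegral.integral_congr
        (g := fun θ => -(2 / t₀) * h0E P χ t₀ θ + dE P χ t₀ θ)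
        (fun θ _ => identity_e' hP hχ heq7 heq8 t₀ ht₀ θ)]
      rw [intervalIntegral.integral_add hint1 hint2, hflux t₀ ht₀, add_zero,
        intervalIntegral.integral_const_mul]
    rw [hiv] at hD
    rw [hEeq]
    exact hD
  have nonpos : ∀ t ∈ Ioi (0:ℝ),
      (-(2 / t) * ∫ θ in (0:ℝ)..(2 * π),
          ((pt P t θ) ^ 2 + Real.exp (2 * P t θ) * (pt χ t θ) ^ 2)) ≤ 0 := by
    intro t ht
    have ht' : (0:ℝ) < t := ht
    have hI : 0 ≤ ∫ θ in (0:ℝ)..(2 * π),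
        ((pt P t θ) ^ 2 + Real.exp (2 * P t θ) * (pt χ t θ) ^ 2) :=
      intervalIntegral.integral_nonneg h2pi (fun θ _ => by positivity)
    have h2t : 0 < 2 / t := by positivity
    nlinarith
  refine ⟨fun t ht => ⟨main t ht, nonpos t ht⟩, ?_⟩
  intro t₁ h₁ t₂ h₂ h12
  have hanti : AntitoneOn E (Ioi 0) := by
    apply antitoneOn_of_deriv_nonpos (convex_Ioi 0)
    · exact fun x hx => (main x hx).continuousAt.continuousWithinAt
    · intro x hx
      rw [interior_Ioi] at hx
      exact (main x hx).differentiableAt.differentiableWithinAt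
    · intro x hx
      rw [interior_Ioi] at hx
      rw [(main x hx).deriv]
      exact nonpos x hx
  exact hanti h₁ h₂ h12
end

section
/- Let P̄, χ : (0,∞) × ℝ → ℝ be smooth, 2π-periodic in θ, and satisfy the evolution equations (7) and (8), and let E(t) = ∫₀^{2π} [P̄_t² + P̄_θ² + e^{2P̄}(χ_t² + χ_θ²)](t,θ) dθ. Then for every t₀ > 0 the integrated decay estimate ∫_{t₀}^{∞} (2/s) ∫₀^{2π} (P̄_t² + e^{2P̄} χ_t²)(s,θ) dθ ds ≤ E(t₀) holds; in particular the left-hand side is finite. -/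
open Real Set MeasureTheory intervalIntegral

namespace GowdyAux

noncomputable def Dt (g : ℝ × ℝ → ℝ) : ℝ × ℝ → ℝ := fun p => fderiv ℝ g p (1, 0)
noncomputable def Dx (g : ℝ × ℝ → ℝ) : ℝ × ℝ → ℝ := fun p => fderiv ℝ g p (0, 1)

variable {U : Set (ℝ × ℝ)} {g : ℝ × ℝ → ℝ}

lemma contDiffOn_Dt (hU : IsOpen U) (hg : ContDiffOn ℝ (⊤ : ℕ∞) g U) :
    ContDiffOn ℝ (⊤ : ℕ∞) (Dt g) U :=
  (hg.fderiv_of_isOpen hU (by simp)).clm_apply contDiffOn_const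

lemma contDiffOn_Dx (hU : IsOpen U) (hg : ContDiffOn ℝ (⊤ : ℕ∞) g U) :
    ContDiffOn ℝ (⊤ : ℕ∞) (Dx g) U :=
  (hg.fderiv_of_isOpen hU (by simp)).clm_apply contDiffOn_const

lemma hasDerivAt_slice_t (hU : IsOpen U) (hg : ContDiffOn ℝ (⊤ : ℕ∞) g U) {t θ : ℝ}
    (hp : (t, θ) ∈ U) : HasDerivAt (fun s => g (s, θ)) (Dt g (t, θ)) t := by
  have hd : DifferentiableAt ℝ g (t, θ) :=
    (hg.contDiffAt (hU.mem_nhds hp)).differentiableAt (by simp)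
  have h1 : HasDerivAt (fun s : ℝ => (s, θ)) ((1 : ℝ), (0 : ℝ)) t :=
    (hasDerivAt_id t).prodMk (hasDerivAt_const t θ)
  simpa [Dt, Function.comp_def] using hd.hasFDerivAt.comp_hasDerivAt t h1

lemma hasDerivAt_slice_x' (hU : IsOpen U) (hg : ContDiffOn ℝ (⊤ : ℕ∞) g U) {t θ : ℝ}
    (hp : (t, θ) ∈ U) : HasDerivAt (fun x => g (t, x)) (Dx g (t, θ)) θ := by
  have hd : DifferentiableAt ℝ g (t, θ) :=
    (hg.contDiffAt (hU.mem_nhds hp)).differentiableAt (by simp)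
  have h1 : HasDerivAt (fun x : ℝ => (t, x)) ((0 : ℝ), (1 : ℝ)) θ :=
    (hasDerivAt_const θ t).prodMk (hasDerivAt_id θ)
  simpa [Dx, Function.comp_def] using hd.hasFDerivAt.comp_hasDerivAt θ h1

lemma pt_eq {f : ℝ → ℝ → ℝ} (hU : IsOpen U) (hg : ContDiffOn ℝ (⊤ : ℕ∞) g U)
    (hfg : ∀ p ∈ U, f p.1 p.2 = g p) {t θ : ℝ} (hp : (t, θ) ∈ U) :
    pt f t θ = Dt g (t, θ) := by
  have hev : (fun s => f s θ) =ᶠ[nhds t] fun s => g (s, θ) := by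
    have hcont : Continuous (fun s : ℝ => (s, θ)) := continuous_id.prodMk continuous_const
    filter_upwards [hcont.continuousAt.preimage_mem_nhds (hU.mem_nhds hp)] with s hs
    exact hfg _ hs
  rw [pt, hev.deriv_eq, (hasDerivAt_slice_t hU hg hp).deriv]

lemma px_eq {f : ℝ → ℝ → ℝ} (hU : IsOpen U) (hg : ContDiffOn ℝ (⊤ : ℕ∞) g U)
    (hfg : ∀ p ∈ U, f p.1 p.2 = g p) {t θ : ℝ} (hp : (t, θ) ∈ U) :
    px f t θ = Dx g (t, θ) := by
  have hev : (fun x => f t x) =ᶠ[nhds θ] fun x => g (t, x) := by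
    have hcont : Continuous (fun x : ℝ => (t, x)) := continuous_const.prodMk continuous_id
    filter_upwards [hcont.continuousAt.preimage_mem_nhds (hU.mem_nhds hp)] with x hx
    exact hfg _ hx
  rw [px, hev.deriv_eq, (hasDerivAt_slice_x' hU hg hp).deriv]

lemma Dx_Dt_symm (hU : IsOpen U) (hg : ContDiffOn ℝ (⊤ : ℕ∞) g U) {p : ℝ × ℝ} (hp : p ∈ U) :
    Dx (Dt g) p = Dt (Dx g) p := by
  have hca : ContDiffAt ℝ (⊤ : ℕ∞) g p := hg.contDiffAt (hU.mem_nhds hp)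
  have hsymm : IsSymmSndFDerivAt ℝ g p := hca.isSymmSndFDerivAt (by rw [minSmoothness_of_isRCLikeNormedField]; exact WithTop.coe_le_coe.mpr (le_top : (2 : ℕ∞) ≤ ⊤))
  have hfd : ContDiffOn ℝ (⊤ : ℕ∞) (fderiv ℝ g) U := hg.fderiv_of_isOpen hU (by simp)
  have hd2 : HasFDerivAt (fderiv ℝ g) (fderiv ℝ (fderiv ℝ g) p) p :=
    ((hfd.contDiffAt (hU.mem_nhds hp)).differentiableAt (by simp)).hasFDerivAt
  have key : ∀ v : ℝ × ℝ, HasFDerivAt (fun q => fderiv ℝ g q v)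
      ((ContinuousLinearMap.apply ℝ ℝ v).comp (fderiv ℝ (fderiv ℝ g) p)) p := fun v =>
    (ContinuousLinearMap.apply ℝ ℝ v).hasFDerivAt.comp p hd2
  have h1 : Dx (Dt g) p = fderiv ℝ (fderiv ℝ g) p (0, 1) (1, 0) := by
    show fderiv ℝ (fun q => fderiv ℝ g q (1, 0)) p (0, 1) = _
    rw [(key (1, 0)).fderiv]
    rfl
  have h2 : Dt (Dx g) p = fderiv ℝ (fderiv ℝ g) p (1, 0) (0, 1) := by
    show fderiv ℝ (fun q => fderiv ℝ g q (0, 1)) p (1, 0) = _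
    rw [(key (0, 1)).fderiv]
    rfl
  rw [h1, h2, hsymm (0, 1) (1, 0)]

lemma fderiv_shift (hU : IsOpen U) (hg : ContDiffOn ℝ (⊤ : ℕ∞) g U)
    (hper : ∀ p : ℝ × ℝ, g (p.1, p.2 + 2 * π) = g p) {p : ℝ × ℝ}
    (hp : (p.1, p.2 + 2 * π) ∈ U) :
    fderiv ℝ g p = fderiv ℝ g (p.1, p.2 + 2 * π) := by
  have hd : DifferentiableAt ℝ g (p.1, p.2 + 2 * π) :=
    (hg.contDiffAt (hU.mem_nhds hp)).differentiableAt (by simp)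
  have hT : HasFDerivAt (fun q : ℝ × ℝ => (q.1, q.2 + 2 * π))
      (ContinuousLinearMap.id ℝ (ℝ × ℝ)) p := by
    have heq : (fun q : ℝ × ℝ => (q.1, q.2 + 2 * π)) = fun q : ℝ × ℝ => q + ((0 : ℝ), 2 * π) := by
      funext q
      simp [Prod.ext_iff]
    rw [heq]
    exact (hasFDerivAt_id p).add_const _
  have hcomp := hd.hasFDerivAt.comp p hT
  have hgT : (g ∘ fun q : ℝ × ℝ => (q.1, q.2 + 2 * π)) = g := funext fun q => hper q
  rw [hgT] at hcomp
  rw [hcomp.fderiv]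
  ext v <;> simp

noncomputable def Phi (F X : ℝ × ℝ → ℝ) : ℝ × ℝ → ℝ :=
  fun p => (Dt F p) ^ 2 + (Dx F p) ^ 2 + Real.exp (2 * F p) * ((Dt X p) ^ 2 + (Dx X p) ^ 2)

noncomputable def Psi (F X : ℝ × ℝ → ℝ) : ℝ × ℝ → ℝ :=
  fun p => 2 * Dt F p * Dx F p + 2 * Real.exp (2 * F p) * Dt X p * Dx X p

noncomputable def Gf (F X : ℝ × ℝ → ℝ) : ℝ × ℝ → ℝ :=
  fun p => (Dt F p) ^ 2 + Real.exp (2 * F p) * (Dt X p) ^ 2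

variable {F X : ℝ × ℝ → ℝ}

lemma contDiffOn_Phi (hU : IsOpen U) (hF : ContDiffOn ℝ (⊤ : ℕ∞) F U) (hX : ContDiffOn ℝ (⊤ : ℕ∞) X U) :
    ContDiffOn ℝ (⊤ : ℕ∞) (Phi F X) U :=
  (((contDiffOn_Dt hU hF).pow 2).add ((contDiffOn_Dx hU hF).pow 2)).add
    (((contDiffOn_const.mul hF).exp).mul
      (((contDiffOn_Dt hU hX).pow 2).add ((contDiffOn_Dx hU hX).pow 2)))

lemma contDiffOn_Psi (hU : IsOpen U) (hF : ContDiffOn ℝ (⊤ : ℕ∞) F U) (hX : ContDiffOn ℝ (⊤ : ℕ∞) X U) :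
    ContDiffOn ℝ (⊤ : ℕ∞) (Psi F X) U :=
  ((contDiffOn_const.mul (contDiffOn_Dt hU hF)).mul (contDiffOn_Dx hU hF)).add
    ((((contDiffOn_const.mul ((contDiffOn_const.mul hF).exp)).mul
      (contDiffOn_Dt hU hX))).mul (contDiffOn_Dx hU hX))

lemma contDiffOn_Gf (hU : IsOpen U) (hF : ContDiffOn ℝ (⊤ : ℕ∞) F U) (hX : ContDiffOn ℝ (⊤ : ℕ∞) X U) :
    ContDiffOn ℝ (⊤ : ℕ∞) (Gf F X) U :=
  ((contDiffOn_Dt hU hF).pow 2).add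
    (((contDiffOn_const.mul hF).exp).mul ((contDiffOn_Dt hU hX).pow 2))

lemma dt_Phi (hU : IsOpen U) (hF : ContDiffOn ℝ (⊤ : ℕ∞) F U) (hX : ContDiffOn ℝ (⊤ : ℕ∞) X U)
    {t θ : ℝ} (hp : (t, θ) ∈ U) :
    Dt (Phi F X) (t, θ) =
      2 * Dt F (t, θ) * Dt (Dt F) (t, θ) + 2 * Dx F (t, θ) * Dt (Dx F) (t, θ)
      + Real.exp (2 * F (t, θ)) * (2 * Dt F (t, θ)) * ((Dt X (t, θ)) ^ 2 + (Dx X (t, θ)) ^ 2)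
      + Real.exp (2 * F (t, θ)) *
          (2 * Dt X (t, θ) * Dt (Dt X) (t, θ) + 2 * Dx X (t, θ) * Dt (Dx X) (t, θ)) := by
  have dF := hasDerivAt_slice_t hU hF hp
  have dA := hasDerivAt_slice_t hU (contDiffOn_Dt hU hF) hp
  have dB := hasDerivAt_slice_t hU (contDiffOn_Dx hU hF) hp
  have dC := hasDerivAt_slice_t hU (contDiffOn_Dt hU hX) hp
  have dD := hasDerivAt_slice_t hU (contDiffOn_Dx hU hX) hp
  have dPhi := hasDerivAt_slice_t hU (contDiffOn_Phi hU hF hX) hp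
  have dexp : HasDerivAt (fun s => Real.exp (2 * F (s, θ)))
      (Real.exp (2 * F (t, θ)) * (2 * Dt F (t, θ))) t := by
    simpa using (dF.const_mul 2).exp
  have hexplicit : HasDerivAt (fun s => Phi F X (s, θ))
      ((2 * Dt F (t, θ) ^ (2 - 1) * Dt (Dt F) (t, θ) + 2 * Dx F (t, θ) ^ (2 - 1) * Dt (Dx F) (t, θ))
        + (Real.exp (2 * F (t, θ)) * (2 * Dt F (t, θ)) * ((Dt X (t, θ)) ^ 2 + (Dx X (t, θ)) ^ 2)
          + Real.exp (2 * F (t, θ)) *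
            (2 * Dt X (t, θ) ^ (2 - 1) * Dt (Dt X) (t, θ)
              + 2 * Dx X (t, θ) ^ (2 - 1) * Dt (Dx X) (t, θ)))) t := by
    have := ((dA.pow 2).add (dB.pow 2)).add (dexp.mul ((dC.pow 2).add (dD.pow 2)))
    unfold Phi
    convert this using 1 <;> (try funext s) <;> (try simp only [Pi.add_apply, Pi.mul_apply, Pi.pow_apply]) <;> (try push_cast) <;> (try ring)
    all_goals rfl
  rw [dPhi.unique hexplicit]
  try push_cast
  try ring

lemma dx_Psi (hU : IsOpen U) (hF : ContDiffOn ℝ (⊤ : ℕ∞) F U) (hX : ContDiffOn ℝ (⊤ : ℕ∞) X U)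
    {t θ : ℝ} (hp : (t, θ) ∈ U) :
    Dx (Psi F X) (t, θ) =
      2 * Dx (Dt F) (t, θ) * Dx F (t, θ) + 2 * Dt F (t, θ) * Dx (Dx F) (t, θ)
      + 2 * (Real.exp (2 * F (t, θ)) * (2 * Dx F (t, θ))) * Dt X (t, θ) * Dx X (t, θ)
      + 2 * Real.exp (2 * F (t, θ)) * Dx (Dt X) (t, θ) * Dx X (t, θ)
      + 2 * Real.exp (2 * F (t, θ)) * Dt X (t, θ) * Dx (Dx X) (t, θ) := by
  have dF := hasDerivAt_slice_x' hU hF hp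
  have dA := hasDerivAt_slice_x' hU (contDiffOn_Dt hU hF) hp
  have dB := hasDerivAt_slice_x' hU (contDiffOn_Dx hU hF) hp
  have dC := hasDerivAt_slice_x' hU (contDiffOn_Dt hU hX) hp
  have dD := hasDerivAt_slice_x' hU (contDiffOn_Dx hU hX) hp
  have dPsi := hasDerivAt_slice_x' hU (contDiffOn_Psi hU hF hX) hp
  have dexp : HasDerivAt (fun x => Real.exp (2 * F (t, x)))
      (Real.exp (2 * F (t, θ)) * (2 * Dx F (t, θ))) θ := by
    simpa using (dF.const_mul 2).exp
  have hexplicit : HasDerivAt (fun x => Psi F X (t, x))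
      ((2 * Dx (Dt F) (t, θ) * Dx F (t, θ) + 2 * Dt F (t, θ) * Dx (Dx F) (t, θ))
        + ((2 * (Real.exp (2 * F (t, θ)) * (2 * Dx F (t, θ))) * Dt X (t, θ)
            + 2 * Real.exp (2 * F (t, θ)) * Dx (Dt X) (t, θ)) * Dx X (t, θ)
          + 2 * Real.exp (2 * F (t, θ)) * Dt X (t, θ) * Dx (Dx X) (t, θ))) θ := by
    have := ((dA.const_mul 2).mul dB).add (((dexp.const_mul 2).mul dC).mul dD)
    unfold Psi
    convert this using 1
    all_goals try funext x
    all_goals try simp only [Pi.add_apply, Pi.mul_apply, Pi.pow_apply]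
    all_goals try ring
    all_goals rfl
  rw [dPsi.unique hexplicit]
  try ring

lemma continuous_slice_x {g : ℝ × ℝ → ℝ}
    (hg : ContinuousOn g (Ioi (0:ℝ) ×ˢ (univ : Set ℝ))) {s : ℝ} (hs : 0 < s) :
    Continuous fun θ => g (s, θ) := by
  rw [continuous_iff_continuousAt]
  intro θ
  have hp : (s, θ) ∈ Ioi (0:ℝ) ×ˢ (univ : Set ℝ) := ⟨hs, trivial⟩
  exact ((hg.continuousAt (((isOpen_Ioi.prod isOpen_univ)).mem_nhds hp))).comp
    ((continuous_const.prodMk continuous_id).continuousAt)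

lemma hasDerivAt_integral_slice {h : ℝ × ℝ → ℝ}
    (hsm : ContDiffOn ℝ (⊤ : ℕ∞) h (Ioi (0:ℝ) ×ˢ (univ : Set ℝ))) {t : ℝ} (ht : 0 < t) :
    HasDerivAt (fun s => ∫ θ in (0:ℝ)..(2 * π), h (s, θ))
      (∫ θ in (0:ℝ)..(2 * π), Dt h (t, θ)) t := by
  have hUopen : IsOpen (Ioi (0:ℝ) ×ˢ (univ : Set ℝ)) := isOpen_Ioi.prod isOpen_univ
  have hmem : ∀ {s θ : ℝ}, 0 < s → (s, θ) ∈ Ioi (0:ℝ) ×ˢ (univ : Set ℝ) :=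
    fun hs => ⟨hs, trivial⟩
  have hDt : ContDiffOn ℝ (⊤ : ℕ∞) (Dt h) (Ioi (0:ℝ) ×ˢ (univ : Set ℝ)) := contDiffOn_Dt hUopen hsm
  have hKcomp : IsCompact (Icc (t/2) (2*t) ×ˢ Icc (0:ℝ) (2*π)) :=
    isCompact_Icc.prod isCompact_Icc
  have hKU : (Icc (t/2) (2*t) ×ˢ Icc (0:ℝ) (2*π)) ⊆ Ioi (0:ℝ) ×ˢ (univ : Set ℝ) := by
    rintro ⟨a, b⟩ ⟨ha, _⟩
    exact ⟨lt_of_lt_of_le (by linarith) ha.1, trivial⟩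
  obtain ⟨M, hM⟩ := hKcomp.exists_bound_of_continuousOn (hDt.continuousOn.mono hKU)
  refine (intervalIntegral.hasDerivAt_integral_of_dominated_loc_of_deriv_le
    (F := fun s θ => h (s, θ)) (F' := fun s θ => Dt h (s, θ)) (bound := fun _ => M)
    (s := Metric.ball t (t/2)) (Metric.ball_mem_nhds _ (by positivity)) ?_ ?_ ?_ ?_ ?_ ?_).2
  · filter_upwards [isOpen_Ioi.mem_nhds ht] with s hs
    exact ((continuous_slice_x hsm.continuousOn hs).aestronglyMeasurable).restrict
  · exact (continuous_slice_x hsm.continuousOn ht).intervalIntegrable _ _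
  · exact ((continuous_slice_x hDt.continuousOn ht).aestronglyMeasurable).restrict
  · refine Filter.Eventually.of_forall (fun θ hθ s hs => ?_)
    have hθ' : θ ∈ Set.Ioc (0:ℝ) (2*π) := by
      rwa [Set.uIoc_of_le (by positivity)] at hθ
    have h1 : |s - t| < t/2 := by
      rw [Metric.mem_ball, Real.dist_eq] at hs
      exact hs
    refine hM (s, θ) ⟨⟨?_, ?_⟩, ⟨hθ'.1.le, hθ'.2⟩⟩
    · linarith [(abs_lt.1 h1).1]
    · linarith [(abs_lt.1 h1).2]
  · exact intervalIntegrable_const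
  · refine Filter.Eventually.of_forall (fun θ hθ s hs => ?_)
    have h1 : |s - t| < t/2 := by
      rw [Metric.mem_ball, Real.dist_eq] at hs
      exact hs
    have hspos : 0 < s := by linarith [(abs_lt.1 h1).1]
    exact hasDerivAt_slice_t hUopen hsm (hmem hspos)

lemma final_step {g G : ℝ → ℝ} {t₀ : ℝ} (ht₀ : 0 < t₀)
    (hder : ∀ s, 0 < s → HasDerivAt (fun r => -g r) (G s) s)
    (hgnonneg : ∀ s, 0 < s → 0 ≤ g s)
    (hGnonneg : ∀ s, 0 < s → 0 ≤ G s) :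
    IntegrableOn G (Ioi t₀) ∧ (∫ s in Ioi t₀, G s) ≤ g t₀ := by
  have hmono : MonotoneOn (fun r => -g r) (Ici t₀) := by
    apply monotoneOn_of_deriv_nonneg (convex_Ici t₀)
    · exact fun x hx => ((hder x (lt_of_lt_of_le ht₀ hx)).continuousAt).continuousWithinAt
    · intro x hx
      rw [interior_Ici] at hx
      exact ((hder x (ht₀.trans hx)).differentiableAt).differentiableWithinAt
    · intro x hx
      rw [interior_Ici] at hx
      rw [(hder x (ht₀.trans hx)).deriv]
      exact hGnonneg x (ht₀.trans hx)
  have hmax : Monotone (fun s => -g (max s t₀)) := fun s₁ s₂ h12 =>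
    hmono (mem_Ici.mpr (le_max_right _ _)) (mem_Ici.mpr (le_max_right _ _))
      (max_le_max h12 le_rfl)
  have hbdd : BddAbove (Set.range fun s => -g (max s t₀)) := by
    refine ⟨0, ?_⟩
    rintro y ⟨s, rfl⟩
    have h0 : 0 ≤ g (max s t₀) := hgnonneg _ (lt_of_lt_of_le ht₀ (le_max_right _ _))
    simp only
    linarith
  have htend : Filter.Tendsto (fun r => -g r) Filter.atTop (nhds (⨆ s, -g (max s t₀))) := by
    refine (tendsto_atTop_ciSup hmax hbdd).congr' ?_
    filter_upwards [Filter.eventually_ge_atTop t₀] with s hs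
    rw [max_eq_left hs]
  have hL0 : (⨆ s, -g (max s t₀)) ≤ 0 := by
    apply ciSup_le
    intro s
    have h0 : 0 ≤ g (max s t₀) := hgnonneg _ (lt_of_lt_of_le ht₀ (le_max_right _ _))
    linarith
  have hcont : ContinuousWithinAt (fun r => -g r) (Ici t₀) t₀ :=
    ((hder t₀ ht₀).continuousAt).continuousWithinAt
  have hderiv' : ∀ x ∈ Ioi t₀, HasDerivAt (fun r => -g r) (G x) x :=
    fun x hx => hder x (ht₀.trans hx)
  have hpos' : ∀ x ∈ Ioi t₀, 0 ≤ G x := fun x hx => hGnonneg x (ht₀.trans hx)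
  refine ⟨integrableOn_Ioi_deriv_of_nonneg hcont hderiv' hpos' htend, ?_⟩
  rw [integral_Ioi_of_hasDerivAt_of_nonneg hcont hderiv' hpos' htend]
  linarith

end GowdyAux

open GowdyAux

/-- Integrated decay estimate:
`∫_{t₀}^∞ (2/s) ∫₀^{2π} (P̄_t² + e^{2P̄} χ_t²) dθ ds ≤ E(t₀)`, and in
particular the left-hand side is finite. -/
theorem integrated_decay (P χ : ℝ → ℝ → ℝ)
    (hP : ContDiffOn ℝ (⊤ : ℕ∞) (Function.uncurry P) (Ioi 0 ×ˢ univ))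
    (hχ : ContDiffOn ℝ (⊤ : ℕ∞) (Function.uncurry χ) (Ioi 0 ×ˢ univ))
    (hPper : ∀ t θ : ℝ, P t (θ + 2 * π) = P t θ)
    (hχper : ∀ t θ : ℝ, χ t (θ + 2 * π) = χ t θ)
    (heq7 : ∀ t ∈ Ioi (0:ℝ), ∀ θ : ℝ,
      pt (pt P) t θ + t⁻¹ * pt P t θ - px (px P) t θ
        = Real.exp (2 * P t θ) * ((pt χ t θ) ^ 2 - (px χ t θ) ^ 2))
    (heq8 : ∀ t ∈ Ioi (0:ℝ), ∀ θ : ℝ,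
      pt (pt χ) t θ + t⁻¹ * pt χ t θ - px (px χ) t θ
        = -2 * (pt P t θ * pt χ t θ - px P t θ * px χ t θ))
    (E : ℝ → ℝ)
    (hE : ∀ t : ℝ, E t = ∫ θ in (0:ℝ)..(2 * π),
      ((pt P t θ) ^ 2 + (px P t θ) ^ 2
        + Real.exp (2 * P t θ) * ((pt χ t θ) ^ 2 + (px χ t θ) ^ 2))) :
    ∀ t₀ ∈ Ioi (0:ℝ),
      IntegrableOn
        (fun s => (2 / s) * ∫ θ in (0:ℝ)..(2 * π),
          ((pt P s θ) ^ 2 + Real.exp (2 * P s θ) * (pt χ s θ) ^ 2)) (Ioi t₀) ∧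
      (∫ s in Ioi t₀, (2 / s) * ∫ θ in (0:ℝ)..(2 * π),
          ((pt P s θ) ^ 2 + Real.exp (2 * P s θ) * (pt χ s θ) ^ 2)) ≤ E t₀ := by
  intro t₀ ht₀
  have ht₀' : (0:ℝ) < t₀ := ht₀
  have hUopen : IsOpen (Ioi (0:ℝ) ×ˢ (univ : Set ℝ)) := isOpen_Ioi.prod isOpen_univ
  have hmem : ∀ {s w : ℝ}, 0 < s → (s, w) ∈ Ioi (0:ℝ) ×ˢ (univ : Set ℝ) :=
    fun hs => ⟨hs, trivial⟩
  -- first-order translations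
  have htP : ∀ {s w : ℝ}, 0 < s → pt P s w = Dt (Function.uncurry P) (s, w) :=
    fun hs => pt_eq hUopen hP (fun _ _ => rfl) (hmem hs)
  have hxP : ∀ {s w : ℝ}, 0 < s → px P s w = Dx (Function.uncurry P) (s, w) :=
    fun hs => px_eq hUopen hP (fun _ _ => rfl) (hmem hs)
  have htX : ∀ {s w : ℝ}, 0 < s → pt χ s w = Dt (Function.uncurry χ) (s, w) :=
    fun hs => pt_eq hUopen hχ (fun _ _ => rfl) (hmem hs)
  have hxX : ∀ {s w : ℝ}, 0 < s → px χ s w = Dx (Function.uncurry χ) (s, w) :=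
    fun hs => px_eq hUopen hχ (fun _ _ => rfl) (hmem hs)
  have httP : ∀ {s w : ℝ}, 0 < s →
      pt (pt P) s w = Dt (Dt (Function.uncurry P)) (s, w) :=
    fun hs => pt_eq hUopen (contDiffOn_Dt hUopen hP) (fun p hp => htP hp.1) (hmem hs)
  have hxxP : ∀ {s w : ℝ}, 0 < s →
      px (px P) s w = Dx (Dx (Function.uncurry P)) (s, w) :=
    fun hs => px_eq hUopen (contDiffOn_Dx hUopen hP) (fun p hp => hxP hp.1) (hmem hs)
  have httX : ∀ {s w : ℝ}, 0 < s →
      pt (pt χ) s w = Dt (Dt (Function.uncurry χ)) (s, w) :=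
    fun hs => pt_eq hUopen (contDiffOn_Dt hUopen hχ) (fun p hp => htX hp.1) (hmem hs)
  have hxxX : ∀ {s w : ℝ}, 0 < s →
      px (px χ) s w = Dx (Dx (Function.uncurry χ)) (s, w) :=
    fun hs => px_eq hUopen (contDiffOn_Dx hUopen hχ) (fun p hp => hxX hp.1) (hmem hs)
  -- the PDEs in Dt/Dx form
  have e7 : ∀ {s w : ℝ}, 0 < s →
      Dt (Dt (Function.uncurry P)) (s, w) + s⁻¹ * Dt (Function.uncurry P) (s, w)
        - Dx (Dx (Function.uncurry P)) (s, w)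
        = Real.exp (2 * Function.uncurry P (s, w)) *
            ((Dt (Function.uncurry χ) (s, w)) ^ 2 - (Dx (Function.uncurry χ) (s, w)) ^ 2) := by
    intro s w hs
    have h := heq7 s hs w
    rw [httP hs, htP hs, hxxP hs, htX hs, hxX hs] at h
    exact h
  have e8 : ∀ {s w : ℝ}, 0 < s →
      Dt (Dt (Function.uncurry χ)) (s, w) + s⁻¹ * Dt (Function.uncurry χ) (s, w)
        - Dx (Dx (Function.uncurry χ)) (s, w)
        = -2 * (Dt (Function.uncurry P) (s, w) * Dt (Function.uncurry χ) (s, w)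
            - Dx (Function.uncurry P) (s, w) * Dx (Function.uncurry χ) (s, w)) := by
    intro s w hs
    have h := heq8 s hs w
    rw [httX hs, htX hs, hxxX hs, htP hs, hxP hs, hxX hs] at h
    exact h
  -- key pointwise identity
  have hkey : ∀ {s w : ℝ}, 0 < s →
      Dt (Phi (Function.uncurry P) (Function.uncurry χ)) (s, w)
        = Dx (Psi (Function.uncurry P) (Function.uncurry χ)) (s, w)
          - (2 / s) * Gf (Function.uncurry P) (Function.uncurry χ) (s, w) := by
    intro s w hs
    have s1 := Dx_Dt_symm hUopen hP (p := (s, w)) (hmem hs)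
    have s2 := Dx_Dt_symm hUopen hχ (p := (s, w)) (hmem hs)
    have h7 := e7 (w := w) hs
    have h8 := e8 (w := w) hs
    rw [dt_Phi hUopen hP hχ (hmem hs), dx_Psi hUopen hP hχ (hmem hs)]
    unfold Gf
    linear_combination (2 * Dt (Function.uncurry P) (s, w)) * h7
      + (2 * Real.exp (2 * Function.uncurry P (s, w)) * Dt (Function.uncurry χ) (s, w)) * h8
      - (2 * Dx (Function.uncurry P) (s, w)) * s1
      - (2 * Real.exp (2 * Function.uncurry P (s, w)) * Dx (Function.uncurry χ) (s, w)) * s2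
  -- periodicity of Psi
  have hperF : ∀ p : ℝ × ℝ, Function.uncurry P (p.1, p.2 + 2 * π) = Function.uncurry P p :=
    fun p => hPper p.1 p.2
  have hperX : ∀ p : ℝ × ℝ, Function.uncurry χ (p.1, p.2 + 2 * π) = Function.uncurry χ p :=
    fun p => hχper p.1 p.2
  have hPsiper : ∀ {s : ℝ}, 0 < s →
      Psi (Function.uncurry P) (Function.uncurry χ) (s, 2 * π)
        = Psi (Function.uncurry P) (Function.uncurry χ) (s, 0) := by
    intro s hs
    have h1 : fderiv ℝ (Function.uncurry P) (s, (0:ℝ))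
        = fderiv ℝ (Function.uncurry P) (s, 2 * π) := by
      have := fderiv_shift hUopen hP hperF (p := (s, 0)) (hmem hs)
      simpa using this
    have h2 : fderiv ℝ (Function.uncurry χ) (s, (0:ℝ))
        = fderiv ℝ (Function.uncurry χ) (s, 2 * π) := by
      have := fderiv_shift hUopen hχ hperX (p := (s, 0)) (hmem hs)
      simpa using this
    have h3 : Function.uncurry P (s, 2 * π) = Function.uncurry P (s, (0:ℝ)) := by
      simpa using hperF (s, 0)
    unfold Psi Dt Dx
    rw [← h1, ← h2, h3]
  -- the boundary-term integral vanishes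
  have hPsiInt : ∀ {s : ℝ}, 0 < s →
      (∫ w in (0:ℝ)..(2 * π),
        Dx (Psi (Function.uncurry P) (Function.uncurry χ)) (s, w)) = 0 := by
    intro s hs
    have hsm := contDiffOn_Psi hUopen hP hχ
    rw [intervalIntegral.integral_eq_sub_of_hasDerivAt
      (f := fun x => Psi (Function.uncurry P) (Function.uncurry χ) (s, x))
      (fun x _ => hasDerivAt_slice_x' hUopen hsm (hmem hs))
      ((continuous_slice_x (contDiffOn_Dx hUopen hsm).continuousOn hs).intervalIntegrable _ _)]
    rw [hPsiper hs, sub_self]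
  -- derivative of the (negated) energy
  have hGder : ∀ s, 0 < s →
      HasDerivAt (fun r => -(∫ w in (0:ℝ)..(2 * π),
          Phi (Function.uncurry P) (Function.uncurry χ) (r, w)))
        ((2 / s) * ∫ w in (0:ℝ)..(2 * π),
          Gf (Function.uncurry P) (Function.uncurry χ) (s, w)) s := by
    intro s hs
    have h1 := hasDerivAt_integral_slice (contDiffOn_Phi hUopen hP hχ) hs
    have hi1 : IntervalIntegrable
        (fun w => Dx (Psi (Function.uncurry P) (Function.uncurry χ)) (s, w)) volume 0 (2 * π) :=
      (continuous_slice_x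
        (contDiffOn_Dx hUopen (contDiffOn_Psi hUopen hP hχ)).continuousOn hs).intervalIntegrable _ _
    have hi2 : IntervalIntegrable
        (fun w => (2 / s) * Gf (Function.uncurry P) (Function.uncurry χ) (s, w)) volume 0 (2 * π) :=
      (continuous_const.mul (continuous_slice_x (contDiffOn_Gf hUopen hP hχ).continuousOn hs)).intervalIntegrable _ _
    have h2 : (∫ w in (0:ℝ)..(2 * π),
        Dt (Phi (Function.uncurry P) (Function.uncurry χ)) (s, w))
        = -((2 / s) * ∫ w in (0:ℝ)..(2 * π),
            Gf (Function.uncurry P) (Function.uncurry χ) (s, w)) := by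
      rw [intervalIntegral.integral_congr
        (g := fun w => Dx (Psi (Function.uncurry P) (Function.uncurry χ)) (s, w)
          - (2 / s) * Gf (Function.uncurry P) (Function.uncurry χ) (s, w))
        (fun w _ => hkey hs)]
      rw [intervalIntegral.integral_sub hi1 hi2, hPsiInt hs, intervalIntegral.integral_const_mul]
      ring
    rw [h2] at h1
    have h3 := h1.neg
    rw [neg_neg] at h3
    exact h3
  -- nonnegativity
  have hgnonneg : ∀ s, 0 < s →
      0 ≤ ∫ w in (0:ℝ)..(2 * π), Phi (Function.uncurry P) (Function.uncurry χ) (s, w) := by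
    intro s hs
    apply intervalIntegral.integral_nonneg (by positivity)
    intro u _
    simp only [Phi]
    positivity
  have hGnonneg : ∀ s, 0 < s →
      0 ≤ (2 / s) * ∫ w in (0:ℝ)..(2 * π), Gf (Function.uncurry P) (Function.uncurry χ) (s, w) := by
    intro s hs
    apply mul_nonneg (div_nonneg (by norm_num) hs.le)
    apply intervalIntegral.integral_nonneg (by positivity)
    intro u _
    simp only [Gf]
    positivity
  obtain ⟨hint, hle⟩ := final_step ht₀' hGder hgnonneg hGnonneg
  -- transfer to the statement's integrand
  have hIeq : EqOn
      (fun s => (2 / s) * ∫ w in (0:ℝ)..(2 * π),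
        Gf (Function.uncurry P) (Function.uncurry χ) (s, w))
      (fun s => (2 / s) * ∫ θ in (0:ℝ)..(2 * π),
        ((pt P s θ) ^ 2 + Real.exp (2 * P s θ) * (pt χ s θ) ^ 2)) (Ioi t₀) := by
    intro s hs
    have hs' : 0 < s := ht₀'.trans hs
    simp only
    congr 1
    apply intervalIntegral.integral_congr
    intro w _
    simp only [Gf, Function.uncurry_apply_pair, htP hs', htX hs']
  have hEg : E t₀ = ∫ w in (0:ℝ)..(2 * π),
      Phi (Function.uncurry P) (Function.uncurry χ) (t₀, w) := by
    rw [hE t₀]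
    apply intervalIntegral.integral_congr
    intro w _
    simp only [Phi, Function.uncurry_apply_pair, htP ht₀', hxP ht₀', htX ht₀', hxX ht₀']
  constructor
  · exact hint.congr_fun hIeq measurableSet_Ioi
  · calc (∫ s in Ioi t₀, (2 / s) * ∫ θ in (0:ℝ)..(2 * π),
          ((pt P s θ) ^ 2 + Real.exp (2 * P s θ) * (pt χ s θ) ^ 2))
        = ∫ s in Ioi t₀, (2 / s) * ∫ w in (0:ℝ)..(2 * π),
            Gf (Function.uncurry P) (Function.uncurry χ) (s, w) :=
          (setIntegral_congr_fun measurableSet_Ioi hIeq).symm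
      _ ≤ _ := by rw [hEg]; exact hle
end

section
/- Let P̄, χ : (0,∞) × ℝ → ℝ be smooth, 2π-periodic in θ, and satisfy the evolution equations (7) and (8). Then the quantity M(t) = ∫₀^{2π} 2t·(P̄_t P̄_θ + e^{2P̄} χ_t χ_θ)(t,θ) dθ is independent of t ∈ (0,∞); i.e., the integral of the momentum-constraint density is conserved in time. -/
open Real Set MeasureTheory intervalIntegral
open scoped ContDiff

namespace MomAux

noncomputable def Dt (F : ℝ × ℝ → ℝ) (p : ℝ × ℝ) : ℝ := fderiv ℝ F p (1, 0)
noncomputable def Dx (F : ℝ × ℝ → ℝ) (p : ℝ × ℝ) : ℝ := fderiv ℝ F p (0, 1)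

def U : Set (ℝ × ℝ) := Ioi 0 ×ˢ univ

lemma isOpen_U : IsOpen U := isOpen_Ioi.prod isOpen_univ

lemma mem_U {p : ℝ × ℝ} (hp : 0 < p.1) : p ∈ U := ⟨hp, trivial⟩

lemma diffAt {F : ℝ × ℝ → ℝ} (hF : ContDiffOn ℝ ∞ F U) {p : ℝ × ℝ} (hp : 0 < p.1) :
    DifferentiableAt ℝ F p :=
  (hF.contDiffAt (isOpen_U.mem_nhds (mem_U hp))).differentiableAt (by norm_num)

lemma hasDerivAt_t {F : ℝ × ℝ → ℝ} {p : ℝ × ℝ} (hF : DifferentiableAt ℝ F p) :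
    HasDerivAt (fun s => F (s, p.2)) (Dt F p) p.1 := by
  have h1 : HasDerivAt (fun s : ℝ => (s, p.2)) ((1 : ℝ), (0 : ℝ)) p.1 :=
    (hasDerivAt_id' p.1).prodMk (hasDerivAt_const p.1 p.2)
  have h2 : HasFDerivAt F (fderiv ℝ F p) (p.1, p.2) := by
    rw [Prod.mk.eta]; exact hF.hasFDerivAt
  exact h2.comp_hasDerivAt p.1 h1

lemma hasDerivAt_x {F : ℝ × ℝ → ℝ} {p : ℝ × ℝ} (hF : DifferentiableAt ℝ F p) :
    HasDerivAt (fun x => F (p.1, x)) (Dx F p) p.2 := by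
  have h1 : HasDerivAt (fun x : ℝ => (p.1, x)) ((0 : ℝ), (1 : ℝ)) p.2 :=
    (hasDerivAt_const p.2 p.1).prodMk (hasDerivAt_id' p.2)
  have h2 : HasFDerivAt F (fderiv ℝ F p) (p.1, p.2) := by
    rw [Prod.mk.eta]; exact hF.hasFDerivAt
  exact h2.comp_hasDerivAt p.2 h1

lemma contDiffOn_fderiv {F : ℝ × ℝ → ℝ} (hF : ContDiffOn ℝ ∞ F U) :
    ContDiffOn ℝ ∞ (fderiv ℝ F) U :=
  hF.fderiv_of_isOpen isOpen_U (le_of_eq (show ∞ = ∞ + 1 from rfl))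

lemma contDiffOn_Dt {F : ℝ × ℝ → ℝ} (hF : ContDiffOn ℝ ∞ F U) :
    ContDiffOn ℝ ∞ (Dt F) U :=
  (contDiffOn_fderiv hF).clm_apply contDiffOn_const

lemma contDiffOn_Dx {F : ℝ × ℝ → ℝ} (hF : ContDiffOn ℝ ∞ F U) :
    ContDiffOn ℝ ∞ (Dx F) U :=
  (contDiffOn_fderiv hF).clm_apply contDiffOn_const

lemma clairaut {F : ℝ × ℝ → ℝ} (hF : ContDiffOn ℝ ∞ F U) {p : ℝ × ℝ} (hp : 0 < p.1) :
    Dx (Dt F) p = Dt (Dx F) p := by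
  have hsym : IsSymmSndFDerivAt ℝ F p :=
    (hF.contDiffAt (isOpen_U.mem_nhds (mem_U hp))).isSymmSndFDerivAt (by rw [minSmoothness_of_isRCLikeNormedField, show (2 : WithTop ℕ∞) = ((2:ℕ∞) : WithTop ℕ∞) from rfl]; exact WithTop.coe_le_coe.2 le_top)
  have hdf : DifferentiableAt ℝ (fderiv ℝ F) p :=
    ((contDiffOn_fderiv hF).differentiableOn (by norm_num)).differentiableAt
      (isOpen_U.mem_nhds (mem_U hp))
  have e1 : Dx (Dt F) p = fderiv ℝ (fderiv ℝ F) p (0, 1) (1, 0) := by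
    show fderiv ℝ (fun q => fderiv ℝ F q (1, 0)) p (0, 1) = _
    rw [fderiv_clm_apply hdf (differentiableAt_const _)]
    simp
  have e2 : Dt (Dx F) p = fderiv ℝ (fderiv ℝ F) p (1, 0) (0, 1) := by
    show fderiv ℝ (fun q => fderiv ℝ F q (0, 1)) p (1, 0) = _
    rw [fderiv_clm_apply hdf (differentiableAt_const _)]
    simp
  rw [e1, e2, hsym]


lemma pt_eq {f : ℝ → ℝ → ℝ} (hf : ContDiffOn ℝ ∞ (Function.uncurry f) U)
    {t : ℝ} (ht : 0 < t) (θ : ℝ) :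
    pt f t θ = Dt (Function.uncurry f) (t, θ) :=
  (hasDerivAt_t (p := (t, θ)) (diffAt hf ht)).deriv

lemma px_eq {f : ℝ → ℝ → ℝ} (hf : ContDiffOn ℝ ∞ (Function.uncurry f) U)
    {t : ℝ} (ht : 0 < t) (θ : ℝ) :
    px f t θ = Dx (Function.uncurry f) (t, θ) :=
  (hasDerivAt_x (p := (t, θ)) (diffAt hf ht)).deriv

lemma ptpt_eq {f : ℝ → ℝ → ℝ} (hf : ContDiffOn ℝ ∞ (Function.uncurry f) U)
    {t : ℝ} (ht : 0 < t) (θ : ℝ) :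
    pt (pt f) t θ = Dt (Dt (Function.uncurry f)) (t, θ) := by
  have hev : (fun s => pt f s θ) =ᶠ[nhds t] (fun s => Dt (Function.uncurry f) (s, θ)) := by
    filter_upwards [isOpen_Ioi.mem_nhds ht] with s hs
    exact pt_eq hf hs θ
  have h1 : pt (pt f) t θ = deriv (fun s => Dt (Function.uncurry f) (s, θ)) t :=
    Filter.EventuallyEq.deriv_eq hev
  rw [h1]
  exact (hasDerivAt_t (p := (t, θ)) (diffAt (contDiffOn_Dt hf) ht)).deriv

lemma pxpx_eq {f : ℝ → ℝ → ℝ} (hf : ContDiffOn ℝ ∞ (Function.uncurry f) U)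
    {t : ℝ} (ht : 0 < t) (θ : ℝ) :
    px (px f) t θ = Dx (Dx (Function.uncurry f)) (t, θ) := by
  have h0 : (fun x => px f t x) = fun x => Dx (Function.uncurry f) (t, x) :=
    funext fun x => px_eq hf ht x
  have h1 : px (px f) t θ = deriv (fun x => Dx (Function.uncurry f) (t, x)) θ := by
    show deriv (fun x => px f t x) θ = _
    rw [h0]
  rw [h1]
  exact (hasDerivAt_x (p := (t, θ)) (diffAt (contDiffOn_Dx hf) ht)).deriv

lemma Dt_per {f : ℝ → ℝ → ℝ} (hf : ContDiffOn ℝ ∞ (Function.uncurry f) U)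
    (hper : ∀ t θ : ℝ, f t (θ + 2 * π) = f t θ) {t : ℝ} (ht : 0 < t) (θ : ℝ) :
    Dt (Function.uncurry f) (t, θ + 2 * π) = Dt (Function.uncurry f) (t, θ) := by
  rw [← pt_eq hf ht, ← pt_eq hf ht]
  show deriv (fun s => f s (θ + 2 * π)) t = deriv (fun s => f s θ) t
  congr 1
  exact funext fun s => hper s θ

lemma Dx_per {f : ℝ → ℝ → ℝ} (hf : ContDiffOn ℝ ∞ (Function.uncurry f) U)
    (hper : ∀ t θ : ℝ, f t (θ + 2 * π) = f t θ) {t : ℝ} (ht : 0 < t) (θ : ℝ) :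
    Dx (Function.uncurry f) (t, θ + 2 * π) = Dx (Function.uncurry f) (t, θ) := by
  rw [← px_eq hf ht, ← px_eq hf ht]
  show deriv (fun x => f t x) (θ + 2 * π) = deriv (fun x => f t x) θ
  rw [← deriv_comp_add_const]
  congr 1
  exact funext fun x => hper t x


noncomputable def dens (P χ : ℝ → ℝ → ℝ) (p : ℝ × ℝ) : ℝ :=
  2 * p.1 * (Dt (Function.uncurry P) p * Dx (Function.uncurry P) p +
    Real.exp (2 * Function.uncurry P p) * Dt (Function.uncurry χ) p * Dx (Function.uncurry χ) p)

noncomputable def ener (P χ : ℝ → ℝ → ℝ) (p : ℝ × ℝ) : ℝ :=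
  p.1 * ((Dt (Function.uncurry P) p) ^ 2 + (Dx (Function.uncurry P) p) ^ 2 +
    Real.exp (2 * Function.uncurry P p) *
      ((Dt (Function.uncurry χ) p) ^ 2 + (Dx (Function.uncurry χ) p) ^ 2))

variable {P χ : ℝ → ℝ → ℝ}

lemma contDiffOn_exp2P (hP : ContDiffOn ℝ ∞ (Function.uncurry P) U) :
    ContDiffOn ℝ ∞ (fun p => Real.exp (2 * Function.uncurry P p)) U :=
  Real.contDiff_exp.comp_contDiffOn (contDiffOn_const.mul hP)

lemma contDiffOn_dens (hP : ContDiffOn ℝ ∞ (Function.uncurry P) U)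
    (hχ : ContDiffOn ℝ ∞ (Function.uncurry χ) U) :
    ContDiffOn ℝ ∞ (dens P χ) U := by
  unfold dens
  exact (contDiffOn_const.mul contDiff_fst.contDiffOn).mul
    (((contDiffOn_Dt hP).mul (contDiffOn_Dx hP)).add
      (((contDiffOn_exp2P hP).mul (contDiffOn_Dt hχ)).mul (contDiffOn_Dx hχ)))

lemma contDiffOn_ener (hP : ContDiffOn ℝ ∞ (Function.uncurry P) U)
    (hχ : ContDiffOn ℝ ∞ (Function.uncurry χ) U) :
    ContDiffOn ℝ ∞ (ener P χ) U := by
  unfold ener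
  exact contDiff_fst.contDiffOn.mul
    ((((contDiffOn_Dt hP).pow 2).add ((contDiffOn_Dx hP).pow 2)).add
      ((contDiffOn_exp2P hP).mul (((contDiffOn_Dt hχ).pow 2).add ((contDiffOn_Dx hχ).pow 2))))

lemma key (hP : ContDiffOn ℝ ∞ (Function.uncurry P) U)
    (hχ : ContDiffOn ℝ ∞ (Function.uncurry χ) U)
    (E7 : ∀ t > (0:ℝ), ∀ θ : ℝ,
      Dt (Dt (Function.uncurry P)) (t, θ) + t⁻¹ * Dt (Function.uncurry P) (t, θ)
        - Dx (Dx (Function.uncurry P)) (t, θ)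
        = Real.exp (2 * Function.uncurry P (t, θ)) *
            ((Dt (Function.uncurry χ) (t, θ)) ^ 2 - (Dx (Function.uncurry χ) (t, θ)) ^ 2))
    (E8 : ∀ t > (0:ℝ), ∀ θ : ℝ,
      Dt (Dt (Function.uncurry χ)) (t, θ) + t⁻¹ * Dt (Function.uncurry χ) (t, θ)
        - Dx (Dx (Function.uncurry χ)) (t, θ)
        = -2 * (Dt (Function.uncurry P) (t, θ) * Dt (Function.uncurry χ) (t, θ)
            - Dx (Function.uncurry P) (t, θ) * Dx (Function.uncurry χ) (t, θ)))
    {t : ℝ} (ht : 0 < t) (θ : ℝ) :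
    Dt (dens P χ) (t, θ) = Dx (ener P χ) (t, θ) := by
  set F := Function.uncurry P with hF
  set G := Function.uncurry χ with hG
  -- derivatives in the t-direction
  have hA : HasDerivAt (fun s => Dt F (s, θ)) (Dt (Dt F) (t, θ)) t :=
    hasDerivAt_t (p := (t, θ)) (diffAt (contDiffOn_Dt hP) ht)
  have hB : HasDerivAt (fun s => Dx F (s, θ)) (Dt (Dx F) (t, θ)) t :=
    hasDerivAt_t (p := (t, θ)) (diffAt (contDiffOn_Dx hP) ht)
  have hC : HasDerivAt (fun s => Dt G (s, θ)) (Dt (Dt G) (t, θ)) t :=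
    hasDerivAt_t (p := (t, θ)) (diffAt (contDiffOn_Dt hχ) ht)
  have hD : HasDerivAt (fun s => Dx G (s, θ)) (Dt (Dx G) (t, θ)) t :=
    hasDerivAt_t (p := (t, θ)) (diffAt (contDiffOn_Dx hχ) ht)
  have hP0 : HasDerivAt (fun s => F (s, θ)) (Dt F (t, θ)) t :=
    hasDerivAt_t (p := (t, θ)) (diffAt hP ht)
  have hexp : HasDerivAt (fun s => Real.exp (2 * F (s, θ)))
      (Real.exp (2 * F (t, θ)) * (2 * Dt F (t, θ))) t := (hP0.const_mul 2).exp
  have h2s : HasDerivAt (fun s : ℝ => 2 * s) 2 t := by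
    simpa using (hasDerivAt_id' t).const_mul (2:ℝ)
  have htot := h2s.mul ((hA.mul hB).add ((hexp.mul hC).mul hD))
  have hDt : Dt (dens P χ) (t, θ) =
      2 * (Dt F (t, θ) * Dx F (t, θ) + Real.exp (2 * F (t, θ)) * Dt G (t, θ) * Dx G (t, θ)) +
        2 * t * ((Dt (Dt F) (t, θ) * Dx F (t, θ) + Dt F (t, θ) * Dt (Dx F) (t, θ)) +
          ((Real.exp (2 * F (t, θ)) * (2 * Dt F (t, θ)) * Dt G (t, θ) +
            Real.exp (2 * F (t, θ)) * Dt (Dt G) (t, θ)) * Dx G (t, θ) +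
            Real.exp (2 * F (t, θ)) * Dt G (t, θ) * Dt (Dx G) (t, θ))) := by
    refine (hasDerivAt_t (p := (t, θ)) (diffAt (contDiffOn_dens hP hχ) ht)).unique ?_
    exact htot
  -- derivatives in the x-direction
  have hA' : HasDerivAt (fun x => Dt F (t, x)) (Dx (Dt F) (t, θ)) θ :=
    hasDerivAt_x (p := (t, θ)) (diffAt (contDiffOn_Dt hP) ht)
  have hB' : HasDerivAt (fun x => Dx F (t, x)) (Dx (Dx F) (t, θ)) θ :=
    hasDerivAt_x (p := (t, θ)) (diffAt (contDiffOn_Dx hP) ht)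
  have hC' : HasDerivAt (fun x => Dt G (t, x)) (Dx (Dt G) (t, θ)) θ :=
    hasDerivAt_x (p := (t, θ)) (diffAt (contDiffOn_Dt hχ) ht)
  have hD' : HasDerivAt (fun x => Dx G (t, x)) (Dx (Dx G) (t, θ)) θ :=
    hasDerivAt_x (p := (t, θ)) (diffAt (contDiffOn_Dx hχ) ht)
  have hPx : HasDerivAt (fun x => F (t, x)) (Dx F (t, θ)) θ :=
    hasDerivAt_x (p := (t, θ)) (diffAt hP ht)
  have hexp' : HasDerivAt (fun x => Real.exp (2 * F (t, x)))
      (Real.exp (2 * F (t, θ)) * (2 * Dx F (t, θ))) θ := (hPx.const_mul 2).exp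
  have htot' := (((hA'.pow 2).add (hB'.pow 2)).add
      (hexp'.mul ((hC'.pow 2).add (hD'.pow 2)))).const_mul t
  have hDx : Dx (ener P χ) (t, θ) =
      t * (((2:ℕ) * Dt F (t, θ) ^ 1 * Dx (Dt F) (t, θ) +
            (2:ℕ) * Dx F (t, θ) ^ 1 * Dx (Dx F) (t, θ)) +
        (Real.exp (2 * F (t, θ)) * (2 * Dx F (t, θ)) * (Dt G (t, θ) ^ 2 + Dx G (t, θ) ^ 2) +
          Real.exp (2 * F (t, θ)) * ((2:ℕ) * Dt G (t, θ) ^ 1 * Dx (Dt G) (t, θ) +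
            (2:ℕ) * Dx G (t, θ) ^ 1 * Dx (Dx G) (t, θ)))) := by
    refine (hasDerivAt_x (p := (t, θ)) (diffAt (contDiffOn_ener hP hχ) ht)).unique ?_
    exact htot'
  rw [hDt, hDx, clairaut hP (p := (t, θ)) ht, clairaut hχ (p := (t, θ)) ht]
  have h7 := E7 t ht θ
  have h8 := E8 t ht θ
  have h7' : Dt (Dt F) (t, θ) = Dx (Dx F) (t, θ) - t⁻¹ * Dt F (t, θ) +
      Real.exp (2 * F (t, θ)) * ((Dt G (t, θ)) ^ 2 - (Dx G (t, θ)) ^ 2) := by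
    linarith
  have h8' : Dt (Dt G) (t, θ) = Dx (Dx G) (t, θ) - t⁻¹ * Dt G (t, θ) +
      (-2) * (Dt F (t, θ) * Dt G (t, θ) - Dx F (t, θ) * Dx G (t, θ)) := by
    linarith
  rw [h7', h8']
  have htne : t ≠ 0 := ne_of_gt ht
  push_cast
  field_simp
  ring


lemma ener_per (hP : ContDiffOn ℝ ∞ (Function.uncurry P) U)
    (hχ : ContDiffOn ℝ ∞ (Function.uncurry χ) U)
    (hPper : ∀ t θ : ℝ, P t (θ + 2 * π) = P t θ)
    (hχper : ∀ t θ : ℝ, χ t (θ + 2 * π) = χ t θ)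
    {t : ℝ} (ht : 0 < t) (θ : ℝ) :
    ener P χ (t, θ + 2 * π) = ener P χ (t, θ) := by
  unfold ener
  rw [Dt_per hP hPper ht, Dx_per hP hPper ht, Dt_per hχ hχper ht, Dx_per hχ hχper ht,
    show Function.uncurry P (t, θ + 2 * π) = Function.uncurry P (t, θ) from hPper t θ]

lemma cont_slice_x {F : ℝ × ℝ → ℝ} (hF : ContinuousOn F U) {s : ℝ} (hs : 0 < s) :
    Continuous (fun x => F (s, x)) := by
  rw [← continuousOn_univ]
  exact hF.comp (continuous_const.prodMk continuous_id).continuousOn (fun x _ => mem_U hs)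

lemma inner_zero (hP : ContDiffOn ℝ ∞ (Function.uncurry P) U)
    (hχ : ContDiffOn ℝ ∞ (Function.uncurry χ) U)
    (hPper : ∀ t θ : ℝ, P t (θ + 2 * π) = P t θ)
    (hχper : ∀ t θ : ℝ, χ t (θ + 2 * π) = χ t θ)
    (E7 : ∀ t > (0:ℝ), ∀ θ : ℝ,
      Dt (Dt (Function.uncurry P)) (t, θ) + t⁻¹ * Dt (Function.uncurry P) (t, θ)
        - Dx (Dx (Function.uncurry P)) (t, θ)
        = Real.exp (2 * Function.uncurry P (t, θ)) *
            ((Dt (Function.uncurry χ) (t, θ)) ^ 2 - (Dx (Function.uncurry χ) (t, θ)) ^ 2))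
    (E8 : ∀ t > (0:ℝ), ∀ θ : ℝ,
      Dt (Dt (Function.uncurry χ)) (t, θ) + t⁻¹ * Dt (Function.uncurry χ) (t, θ)
        - Dx (Dx (Function.uncurry χ)) (t, θ)
        = -2 * (Dt (Function.uncurry P) (t, θ) * Dt (Function.uncurry χ) (t, θ)
            - Dx (Function.uncurry P) (t, θ) * Dx (Function.uncurry χ) (t, θ)))
    {s : ℝ} (hs : 0 < s) :
    (∫ θ in (0:ℝ)..(2 * π), Dt (dens P χ) (s, θ)) = 0 := by
  have henerS := contDiffOn_ener hP hχ
  have h1 : (∫ θ in (0:ℝ)..(2 * π), Dt (dens P χ) (s, θ))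
      = ∫ θ in (0:ℝ)..(2 * π), Dx (ener P χ) (s, θ) :=
    intervalIntegral.integral_congr fun θ _ => key hP hχ E7 E8 hs θ
  have h2 : (∫ θ in (0:ℝ)..(2 * π), Dx (ener P χ) (s, θ))
      = ener P χ (s, 2 * π) - ener P χ (s, 0) := by
    refine intervalIntegral.integral_eq_sub_of_hasDerivAt
      (f := fun x => ener P χ (s, x)) (f' := fun x => Dx (ener P χ) (s, x))
      (fun x _ => hasDerivAt_x (p := (s, x)) (diffAt henerS hs)) ?_
    exact (cont_slice_x ((contDiffOn_Dx henerS).continuousOn) hs).intervalIntegrable 0 (2 * π)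
  rw [h1, h2, show (2:ℝ) * π = 0 + 2 * π by ring, ener_per hP hχ hPper hχper hs 0, sub_self]

lemma main_le (hP : ContDiffOn ℝ ∞ (Function.uncurry P) U)
    (hχ : ContDiffOn ℝ ∞ (Function.uncurry χ) U)
    (hPper : ∀ t θ : ℝ, P t (θ + 2 * π) = P t θ)
    (hχper : ∀ t θ : ℝ, χ t (θ + 2 * π) = χ t θ)
    (E7 : ∀ t > (0:ℝ), ∀ θ : ℝ,
      Dt (Dt (Function.uncurry P)) (t, θ) + t⁻¹ * Dt (Function.uncurry P) (t, θ)
        - Dx (Dx (Function.uncurry P)) (t, θ)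
        = Real.exp (2 * Function.uncurry P (t, θ)) *
            ((Dt (Function.uncurry χ) (t, θ)) ^ 2 - (Dx (Function.uncurry χ) (t, θ)) ^ 2))
    (E8 : ∀ t > (0:ℝ), ∀ θ : ℝ,
      Dt (Dt (Function.uncurry χ)) (t, θ) + t⁻¹ * Dt (Function.uncurry χ) (t, θ)
        - Dx (Dx (Function.uncurry χ)) (t, θ)
        = -2 * (Dt (Function.uncurry P) (t, θ) * Dt (Function.uncurry χ) (t, θ)
            - Dx (Function.uncurry P) (t, θ) * Dx (Function.uncurry χ) (t, θ)))
    {t₁ t₂ : ℝ} (h1 : 0 < t₁) (h12 : t₁ ≤ t₂) :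
    (∫ θ in (0:ℝ)..(2 * π), dens P χ (t₁, θ)) = ∫ θ in (0:ℝ)..(2 * π), dens P χ (t₂, θ) := by
  have h2 : 0 < t₂ := lt_of_lt_of_le h1 h12
  have h2π : (0:ℝ) ≤ 2 * π := by positivity
  have hdensS := contDiffOn_dens hP hχ
  have hcd : ContinuousOn (dens P χ) U := hdensS.continuousOn
  have hcdt : ContinuousOn (Dt (dens P χ)) U := (contDiffOn_Dt hdensS).continuousOn
  have hintg : ∀ {t : ℝ}, 0 < t →
      IntervalIntegrable (fun θ => dens P χ (t, θ)) volume 0 (2 * π) :=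
    fun ht => (cont_slice_x hcd ht).intervalIntegrable 0 (2 * π)
  have hsub : ∀ θ : ℝ, dens P χ (t₂, θ) - dens P χ (t₁, θ)
      = ∫ s in t₁..t₂, Dt (dens P χ) (s, θ) := by
    intro θ
    refine (intervalIntegral.integral_eq_sub_of_hasDerivAt
      (f := fun s => dens P χ (s, θ)) (f' := fun s => Dt (dens P χ) (s, θ))
      (fun s hs => ?_) ?_).symm
    · have hs0 : 0 < s := by
        rw [uIcc_of_le h12] at hs; exact lt_of_lt_of_le h1 hs.1
      exact hasDerivAt_t (p := (s, θ)) (diffAt hdensS hs0)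
    · apply ContinuousOn.intervalIntegrable
      apply hcdt.comp (continuous_id.prodMk continuous_const).continuousOn
      intro s hs
      rw [uIcc_of_le h12] at hs
      exact mem_U (lt_of_lt_of_le h1 hs.1)
  have hFub : IntegrableOn (fun z : ℝ × ℝ => Dt (dens P χ) (z.2, z.1))
      (Ioc (0:ℝ) (2 * π) ×ˢ Ioc t₁ t₂) (volume.prod volume) := by
    refine (ContinuousOn.integrableOn_compact (isCompact_Icc.prod isCompact_Icc) ?_).mono_set
      (prod_mono Ioc_subset_Icc_self Ioc_subset_Icc_self)
    exact hcdt.comp (continuous_snd.prodMk continuous_fst).continuousOn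
      (fun z hz => mem_U (lt_of_lt_of_le h1 hz.2.1))
  have hswap : (∫ θ in (0:ℝ)..(2 * π), ∫ s in t₁..t₂, Dt (dens P χ) (s, θ))
      = ∫ s in Ioc t₁ t₂, (∫ θ in Ioc (0:ℝ) (2 * π), Dt (dens P χ) (s, θ)) := by
    rw [intervalIntegral.integral_of_le h2π]
    simp_rw [intervalIntegral.integral_of_le h12]
    rw [IntegrableOn, ← Measure.prod_restrict] at hFub
    exact MeasureTheory.integral_integral_swap hFub
  have hzero : (∫ s in Ioc t₁ t₂, (∫ θ in Ioc (0:ℝ) (2 * π), Dt (dens P χ) (s, θ))) = 0 := by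
    rw [MeasureTheory.setIntegral_congr_fun measurableSet_Ioc
      (fun s hs => show (∫ θ in Ioc (0:ℝ) (2 * π), Dt (dens P χ) (s, θ)) = 0 by
        rw [← intervalIntegral.integral_of_le h2π]
        exact inner_zero hP hχ hPper hχper E7 E8 (lt_trans h1 hs.1))]
    simp
  have hdiff : (∫ θ in (0:ℝ)..(2 * π), dens P χ (t₂, θ))
      - (∫ θ in (0:ℝ)..(2 * π), dens P χ (t₁, θ)) = 0 := by
    rw [← intervalIntegral.integral_sub (hintg h2) (hintg h1)]
    rw [intervalIntegral.integral_congr (fun θ _ => hsub θ), hswap, hzero]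
  linarith

end MomAux

/-- The integral of the momentum-constraint density,
`M(t) = ∫₀^{2π} 2t (P̄_t P̄_θ + e^{2P̄} χ_t χ_θ) dθ`, is conserved in time. -/
theorem momentum_conserved (P χ : ℝ → ℝ → ℝ)
    (hP : ContDiffOn ℝ (⊤ : ℕ∞) (Function.uncurry P) (Ioi 0 ×ˢ univ))
    (hχ : ContDiffOn ℝ (⊤ : ℕ∞) (Function.uncurry χ) (Ioi 0 ×ˢ univ))
    (hPper : ∀ t θ : ℝ, P t (θ + 2 * π) = P t θ)
    (hχper : ∀ t θ : ℝ, χ t (θ + 2 * π) = χ t θ)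
    (heq7 : ∀ t ∈ Ioi (0:ℝ), ∀ θ : ℝ,
      pt (pt P) t θ + t⁻¹ * pt P t θ - px (px P) t θ
        = Real.exp (2 * P t θ) * ((pt χ t θ) ^ 2 - (px χ t θ) ^ 2))
    (heq8 : ∀ t ∈ Ioi (0:ℝ), ∀ θ : ℝ,
      pt (pt χ) t θ + t⁻¹ * pt χ t θ - px (px χ) t θ
        = -2 * (pt P t θ * pt χ t θ - px P t θ * px χ t θ)) :
    ∀ t₁ ∈ Ioi (0:ℝ), ∀ t₂ ∈ Ioi (0:ℝ),
      (∫ θ in (0:ℝ)..(2 * π),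
        2 * t₁ * (pt P t₁ θ * px P t₁ θ + Real.exp (2 * P t₁ θ) * pt χ t₁ θ * px χ t₁ θ))
      = ∫ θ in (0:ℝ)..(2 * π),
        2 * t₂ * (pt P t₂ θ * px P t₂ θ + Real.exp (2 * P t₂ θ) * pt χ t₂ θ * px χ t₂ θ) := by
  intro t₁ ht₁ t₂ ht₂
  have ht₁' : (0:ℝ) < t₁ := ht₁
  have ht₂' : (0:ℝ) < t₂ := ht₂
  have hP' : ContDiffOn ℝ ∞ (Function.uncurry P) MomAux.U := hP.of_le (by simp)
  have hχ' : ContDiffOn ℝ ∞ (Function.uncurry χ) MomAux.U := hχ.of_le (by simp)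
  have E7 : ∀ t > (0:ℝ), ∀ θ : ℝ,
      MomAux.Dt (MomAux.Dt (Function.uncurry P)) (t, θ)
        + t⁻¹ * MomAux.Dt (Function.uncurry P) (t, θ)
        - MomAux.Dx (MomAux.Dx (Function.uncurry P)) (t, θ)
        = Real.exp (2 * Function.uncurry P (t, θ)) *
            ((MomAux.Dt (Function.uncurry χ) (t, θ)) ^ 2
              - (MomAux.Dx (Function.uncurry χ) (t, θ)) ^ 2) := by
    intro t ht θ
    have h := heq7 t ht θ
    rw [MomAux.ptpt_eq hP' ht, MomAux.pt_eq hP' ht, MomAux.pxpx_eq hP' ht,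
        MomAux.pt_eq hχ' ht, MomAux.px_eq hχ' ht] at h
    exact h
  have E8 : ∀ t > (0:ℝ), ∀ θ : ℝ,
      MomAux.Dt (MomAux.Dt (Function.uncurry χ)) (t, θ)
        + t⁻¹ * MomAux.Dt (Function.uncurry χ) (t, θ)
        - MomAux.Dx (MomAux.Dx (Function.uncurry χ)) (t, θ)
        = -2 * (MomAux.Dt (Function.uncurry P) (t, θ) * MomAux.Dt (Function.uncurry χ) (t, θ)
            - MomAux.Dx (Function.uncurry P) (t, θ) * MomAux.Dx (Function.uncurry χ) (t, θ)) := by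
    intro t ht θ
    have h := heq8 t ht θ
    rw [MomAux.ptpt_eq hχ' ht, MomAux.pt_eq hχ' ht, MomAux.pxpx_eq hχ' ht,
        MomAux.px_eq hχ' ht, MomAux.pt_eq hP' ht, MomAux.px_eq hP' ht] at h
    exact h
  have hconv : ∀ t : ℝ, 0 < t →
      (∫ θ in (0:ℝ)..(2 * π),
        2 * t * (pt P t θ * px P t θ + Real.exp (2 * P t θ) * pt χ t θ * px χ t θ))
      = ∫ θ in (0:ℝ)..(2 * π), MomAux.dens P χ (t, θ) := by
    intro t ht
    refine intervalIntegral.integral_congr fun θ _ => ?_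
    rw [MomAux.pt_eq hP' ht, MomAux.px_eq hP' ht, MomAux.pt_eq hχ' ht, MomAux.px_eq hχ' ht]
    rfl
  rw [hconv t₁ ht₁', hconv t₂ ht₂']
  rcases le_total t₁ t₂ with h | h
  · exact MomAux.main_le hP' hχ' hPper hχper E7 E8 ht₁' h
  · exact (MomAux.main_le hP' hχ' hPper hχper E7 E8 ht₂' h).symm
end
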